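/- arXiv:1609.03497 — 2 statements merged into one kernel-verified Lean document; each statement's English description precedes it below -/
import Mathlib

section
/- Let D be a Dyck path of size n ≥ 1 with b-sequence (b_1(D), …, b_n(D)) taken in reading order. Then b_1(D) = 0, and for every reading-order position i with 2 ≤ i ≤ n such that the row in reading-order position i is a peak, one has b_i(D) > b_{i−1}(D). -/
open Finset

namespace DeltaCat

/-- `i`-th entry (0-indexed) of an area sequence, defaulting to `0`. -/
def ent (l : List ℕ) (i : ℕ) : ℕ := l.getD i 0

/-- `l` is the area sequence of a Dyck path (of size `l.length ≥ 1`): it is nonempty,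
starts with `0`, and consecutive entries increase by at most one. -/
def IsDyck (l : List ℕ) : Prop :=
  l ≠ [] ∧ ent l 0 = 0 ∧ ∀ i < l.length, i + 1 < l.length → ent l (i + 1) ≤ ent l i + 1

instance (l : List ℕ) : Decidable (IsDyck l) := by unfold IsDyck; infer_instance

/-- the area of a Dyck path -/
def area (l : List ℕ) : ℕ := l.sum

/-- the diagonal inversions of a Dyck path: pairs `(i,j)`, `i < j`, with
`a_i = a_j` or `a_i = a_j + 1` (0-indexed rows). -/
def dinvPairs (l : List ℕ) : Finset (ℕ × ℕ) :=
  (Finset.range l.length ×ˢ Finset.range l.length).filter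
    (fun p => p.1 < p.2 ∧ (ent l p.1 = ent l p.2 ∨ ent l p.1 = ent l p.2 + 1))

/-- the number of diagonal inversions -/
def dinv (l : List ℕ) : ℕ := (dinvPairs l).card

/-- `b'(k) = #{j > k : a_j = a_k} + #{j < k : a_j = a_k + 1}` (0-indexed rows). -/
def bval (l : List ℕ) (k : ℕ) : ℕ :=
  ((Finset.range l.length).filter (fun j => k < j ∧ ent l j = ent l k)).card +
  ((Finset.range l.length).filter (fun j => j < k ∧ ent l j = ent l k + 1)).card

/-- row `i` (0-indexed) is a double rise -/
def IsRise (l : List ℕ) (i : ℕ) : Prop := i + 1 < l.length ∧ ent l (i + 1) = ent l i + 1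

instance (l : List ℕ) (i : ℕ) : Decidable (IsRise l i) := by unfold IsRise; infer_instance

/-- row `i` (0-indexed) is a peak -/
def IsPeak (l : List ℕ) (i : ℕ) : Prop := i < l.length ∧ ¬ IsRise l i

instance (l : List ℕ) (i : ℕ) : Decidable (IsPeak l i) := by unfold IsPeak; infer_instance

/-- `Rise_∘(D,S)`: the decorated rows which are double rises -/
def riseSet (l : List ℕ) (S : Finset ℕ) : Finset ℕ := S.filter (fun i => IsRise l i)

/-- `Peak_∘(D,S)`: the decorated rows which are peaks -/
def peakSet (l : List ℕ) (S : Finset ℕ) : Finset ℕ := S.filter (fun i => IsPeak l i)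

/-- `area_∘(D,S)` -/
def areaC (l : List ℕ) (S : Finset ℕ) : ℕ := area l - ∑ i ∈ riseSet l S, ent l (i + 1)

/-- `dinv_∘(D,S)` -/
def dinvC (l : List ℕ) (S : Finset ℕ) : ℕ := dinv l - ∑ i ∈ peakSet l S, bval l i

/-- the largest row index (0-indexed) attaining the maximal area value -/
def lastMaxRow (l : List ℕ) : ℕ :=
  ((Finset.range l.length).filter
    (fun i => ∀ j ∈ Finset.range l.length, ent l j ≤ ent l i)).sup id

/-- `S` is a valid set of ∘-decorations on the rows of `l` : a set of rows not containing
the largest index attaining the maximal area value. -/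
def ValidDec (l : List ℕ) (S : Finset ℕ) : Prop :=
  (∀ i ∈ S, i < l.length) ∧ lastMaxRow l ∉ S

instance (l : List ℕ) (S : Finset ℕ) : Decidable (ValidDec l S) := by
  unfold ValidDec; infer_instance

/-- the (0-indexed) rows where the path touches the diagonal, i.e. the starts of segments -/
def segStarts (l : List ℕ) : List ℕ :=
  (List.range l.length).filter (fun i => ent l i == 0)

/-- the touch composition of a Dyck path: the list of lengths of the maximal segments -/
def touchComp (l : List ℕ) : List ℕ :=
  List.zipWith (fun cur next => next - cur) (segStarts l) ((segStarts l).drop 1 ++ [l.length])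

/-- the rise-touch composition `α^Rise(D,S)`: the touch composition with the number of
decorated double rises in each segment subtracted from the corresponding part. -/
def riseTouch (l : List ℕ) (S : Finset ℕ) : List ℕ :=
  List.zipWith
    (fun cur next => (next - cur) - ((riseSet l S).filter (fun i => cur ≤ i ∧ i < next)).card)
    (segStarts l) ((segStarts l).drop 1 ++ [l.length])

/-- all lists of length `n` with entries at most `n`; this contains every Dyck path
area sequence of size `n`. -/
def allSeqs (n : ℕ) : Finset (List ℕ) :=
  (Finset.univ : Finset (Fin n → Fin (n + 1))).image fun v => (List.ofFn v).map Fin.val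

/-- the Finset of all Dyck paths of size `n` (encoded by their area sequences) -/
def dyckPaths (n : ℕ) : Finset (List ℕ) := (allSeqs n).filter IsDyck

/-- the Finset of all ∘-decorated Dyck paths of size `n` -/
def decPaths (n : ℕ) : Finset (List ℕ × Finset ℕ) :=
  ((allSeqs n) ×ˢ (Finset.range n).powerset).filter fun p => IsDyck p.1 ∧ ValidDec p.1 p.2

/-- `Cat^Rise_{α,k,ℓ}(q,t)`, the generating function of ∘-decorated Dyck paths of size
`|α| + ℓ` with `k` decorated peaks, `ℓ` decorated double rises and rise-touch composition
`α`, by the statistics `dinv_∘` and `area_∘`; it is `0` when `k < 0` or `ℓ < 0`. -/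
def CatRise {R : Type*} [CommRing R] (q t : R) (α : List ℕ) (k ℓ : ℤ) : R :=
  if 0 ≤ k ∧ 0 ≤ ℓ then
    ∑ p ∈ (decPaths (α.sum + ℓ.toNat)).filter
        (fun p => (peakSet p.1 p.2).card = k.toNat ∧ (riseSet p.1 p.2).card = ℓ.toNat ∧
          riseTouch p.1 p.2 = α),
      q ^ dinvC p.1 p.2 * t ^ areaC p.1 p.2
  else 0

end DeltaCat


namespace DeltaCat

/-- the list of rows of `l` (0-indexed) in reading order: rows are listed by decreasing
area value, and among rows of equal area value by decreasing row index. -/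
def readingList (l : List ℕ) : List ℕ :=
  ((List.range (l.foldr max 0 + 1)).reverse.map
    fun v => ((List.range l.length).filter fun k => ent l k == v).reverse).flatten

/-- the `b`-sequence of `l` (0-indexed): `bAt l i` is `b'` of the row in
reading-order position `i`. -/
def bAt (l : List ℕ) (i : ℕ) : ℕ := bval l ((readingList l).getD i 0)

end DeltaCat

open DeltaCat

/-!
Order the rows lexicographically by `(a_k, k)`; the reading order lists them by decreasing key.
Then `b'(k)` counts the rows whose key lies strictly between `(a_k, k)` and `(a_k + 1, k)`,
so along the reading order `b'` is the size of a sliding window. If `k` is a peak and `k'` is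
the row just after it in key order, no row has its key in `[(a_k + 1, k), (a_{k'} + 1, k'))`:
such a row `j` would need a row at level `a_j - 1` before it with key strictly between those of
`k` and `k'`, found by the discrete intermediate value theorem, or, when `a_j = a_k + 1`,
because the path must come back to level `a_k` after the peak `k` before climbing to `j`.
Hence the window of `k'` is that of `k` with `k'` removed.
-/

lemma exists_mem_Icc_eq_of_le_add_one {f : ℕ → ℕ} {i j v : ℕ} (hij : i ≤ j)
    (hstep : ∀ m, i ≤ m → m < j → f (m + 1) ≤ f m + 1) (hi : f i ≤ v) (hv : v ≤ f j) :
    ∃ m ∈ Icc i j, f m = v := by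
  induction j, hij using Nat.le_induction with
  | base => exact ⟨i, by simp, le_antisymm hi hv⟩
  | succ j hij ih =>
    by_cases hvj : v ≤ f j
    · obtain ⟨m, hm, hfm⟩ := ih (fun m him hmj => hstep m him (by omega)) hvj
      exact ⟨m, by simp only [mem_Icc] at hm ⊢; omega, hfm⟩
    · have := hstep j hij (by omega)
      exact ⟨j + 1, by simp only [mem_Icc]; omega, by omega⟩

lemma List.Pairwise.not_lt_apply_getElem_zero {α β : Type*} [Preorder β] {f : α → β}
    {L : List α} (h : L.Pairwise fun x y => f y < f x) (hL : 0 < L.length) {x : α}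
    (hx : x ∈ L) : ¬ f L[0] < f x := by
  obtain ⟨p, hp, rfl⟩ := List.mem_iff_getElem.mp hx
  rcases p with _ | p
  · exact lt_irrefl _
  · exact (List.pairwise_iff_getElem.mp h 0 (p + 1) hL hp p.succ_pos).asymm

lemma List.Pairwise.not_lt_lt_apply_getElem_succ {α β : Type*} [Preorder β] {f : α → β}
    {L : List α} (h : L.Pairwise fun x y => f y < f x) {i : ℕ} (hi : i + 1 < L.length) {x : α}
    (hx : x ∈ L) : ¬ (f L[i + 1] < f x ∧ f x < f L[i]) := by
  obtain ⟨p, hp, rfl⟩ := List.mem_iff_getElem.mp hx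
  have hrel := List.pairwise_iff_getElem.mp h
  rintro ⟨hlo, hhi⟩
  rcases Nat.lt_or_ge p (i + 1) with hpi | hpi
  · rcases (Nat.lt_succ_iff.mp hpi).lt_or_eq with hpi | rfl
    · exact (hrel p i hp (by omega) hpi).asymm hhi
    · exact lt_irrefl _ hhi
  · rcases hpi.lt_or_eq with hpi | rfl
    · exact (hrel (i + 1) p hi hp hpi).asymm hlo
    · exact lt_irrefl _ hlo

namespace DeltaCat

namespace IsDyck

variable {l : List ℕ}

lemma exists_ent_eq (hl : IsDyck l) {i j v : ℕ} (hij : i ≤ j) (hj : j < l.length)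
    (hi : ent l i ≤ v) (hv : v ≤ ent l j) : ∃ m ∈ Icc i j, ent l m = v :=
  exists_mem_Icc_eq_of_le_add_one hij (fun m _ hmj => hl.2.2 m (by omega) (by omega)) hi hv

lemma exists_lt_ent_eq (hl : IsDyck l) {j v : ℕ} (hj : j < l.length) (hv : v < ent l j) :
    ∃ m < j, ent l m = v := by
  obtain ⟨m, hm, hmv⟩ := hl.exists_ent_eq (Nat.zero_le j) hj (by rw [hl.2.1]; omega) hv.le
  rw [mem_Icc] at hm
  exact ⟨m, lt_of_le_of_ne hm.2 (by rintro rfl; omega), hmv⟩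

lemma ent_succ_le_of_isPeak (hl : IsDyck l) {k : ℕ} (hk : IsPeak l k) (hk1 : k + 1 < l.length) :
    ent l (k + 1) ≤ ent l k := by
  have hstep := hl.2.2 k hk.1 hk1
  have hnot_rise : ¬ IsRise l k := hk.2
  unfold IsRise at hnot_rise
  omega

lemma exists_between_of_isPeak (hl : IsDyck l) {k j : ℕ} (hk : IsPeak l k) (hkj : k < j)
    (hj : j < l.length) (hje : ent l j = ent l k + 1) :
    ∃ m, k < m ∧ m < j ∧ ent l m = ent l k := by
  obtain ⟨m, hm, hme⟩ := hl.exists_ent_eq (show k + 1 ≤ j by omega) hj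
    (hl.ent_succ_le_of_isPeak hk (by omega)) (by omega)
  rw [mem_Icc] at hm
  exact ⟨m, by omega, lt_of_le_of_ne hm.2 (by rintro rfl; omega), hme⟩

end IsDyck

def rowKey (l : List ℕ) (k : ℕ) : ℕ ×ₗ ℕ := toLex (ent l k, k)

def raisedKey (l : List ℕ) (k : ℕ) : ℕ ×ₗ ℕ := toLex (ent l k + 1, k)

lemma rowKey_lt_raisedKey (l : List ℕ) (k : ℕ) : rowKey l k < raisedKey l k :=
  Prod.Lex.toLex_lt_toLex.mpr (Or.inl (Nat.lt_succ_self _))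

def bWindow (l : List ℕ) (k : ℕ) : Finset ℕ :=
  (range l.length).filter fun j => rowKey l k < rowKey l j ∧ rowKey l j < raisedKey l k

lemma bval_eq_card_bWindow (l : List ℕ) (k : ℕ) : bval l k = #(bWindow l k) := by
  rw [bval, ← card_union_of_disjoint, ← filter_or]
  · refine congrArg card (filter_congr fun j _ => ?_)
    simp only [rowKey, raisedKey, Prod.Lex.toLex_lt_toLex]
    omega
  · exact disjoint_filter.mpr fun j _ h₁ h₂ => by omega

lemma IsDyck.not_raisedKey_le_rowKey_lt_raisedKey {l : List ℕ} (hl : IsDyck l) {k k' j : ℕ}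
    (hk : IsPeak l k)
    (hnext : ∀ m < l.length, ¬ (rowKey l k < rowKey l m ∧ rowKey l m < rowKey l k'))
    (hj : j < l.length) : ¬ (raisedKey l k ≤ rowKey l j ∧ rowKey l j < raisedKey l k') := by
  rintro ⟨hkj, hjk'⟩
  simp only [rowKey, raisedKey, Prod.Lex.toLex_lt_toLex, Prod.Lex.toLex_le_toLex] at hkj hjk'
  obtain ⟨m, hmj, hme, hkm⟩ : ∃ m < j, ent l m + 1 = ent l j ∧ rowKey l k < rowKey l m := by
    by_cases hlev : ent l j = ent l k + 1
    · obtain ⟨m, hkm, hmj, hme⟩ := hl.exists_between_of_isPeak hk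
        (lt_of_le_of_ne (by omega) (by rintro rfl; omega)) hj hlev
      exact ⟨m, hmj, by omega, by simp only [rowKey, Prod.Lex.toLex_lt_toLex]; omega⟩
    · obtain ⟨m, hmj, hme⟩ := hl.exists_lt_ent_eq hj (show ent l j - 1 < ent l j by omega)
      exact ⟨m, hmj, by omega, by simp only [rowKey, Prod.Lex.toLex_lt_toLex]; omega⟩
  refine hnext m (by omega) ⟨hkm, ?_⟩
  simp only [rowKey, Prod.Lex.toLex_lt_toLex]
  omega

lemma IsDyck.bval_lt_bval_of_isPeak {l : List ℕ} (hl : IsDyck l) {k k' : ℕ} (hk : IsPeak l k)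
    (hk' : k' < l.length) (hkk' : rowKey l k < rowKey l k')
    (hnext : ∀ m < l.length, ¬ (rowKey l k < rowKey l m ∧ rowKey l m < rowKey l k')) :
    bval l k' < bval l k := by
  have hgap : ∀ j < l.length, ¬ (raisedKey l k ≤ rowKey l j ∧ rowKey l j < raisedKey l k') :=
    fun j hj => hl.not_raisedKey_le_rowKey_lt_raisedKey hk hnext hj
  have hk'_mem : k' ∈ bWindow l k := by
    refine mem_filter.mpr ⟨mem_range.mpr hk', hkk', lt_of_not_ge fun h => ?_⟩
    exact hgap k' hk' ⟨h, rowKey_lt_raisedKey l k'⟩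
  have hsub : bWindow l k' ⊆ bWindow l k := by
    intro j hj
    obtain ⟨hjn, hk'j, hjk'⟩ := mem_filter.mp hj
    refine mem_filter.mpr ⟨hjn, hkk'.trans hk'j, lt_of_not_ge fun h => ?_⟩
    exact hgap j (mem_range.mp hjn) ⟨h, hjk'⟩
  rw [bval_eq_card_bWindow, bval_eq_card_bWindow]
  refine card_lt_card ((ssubset_iff_of_subset hsub).mpr ⟨k', hk'_mem, fun h => ?_⟩)
  exact lt_irrefl _ (mem_filter.mp h).2.1

lemma mem_readingList {l : List ℕ} {k : ℕ} : k ∈ readingList l ↔ k < l.length := by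
  simp only [readingList, List.mem_flatten, List.mem_map, List.mem_reverse, List.mem_range]
  constructor
  · rintro ⟨_, ⟨_, _, rfl⟩, hk⟩
    simp only [List.mem_reverse, List.mem_filter, List.mem_range] at hk
    exact hk.1
  · intro hk
    have hmem : ent l k ∈ l := by
      rw [ent, List.getD_eq_getElem _ _ hk]
      exact List.getElem_mem hk
    exact ⟨_, ⟨ent l k, Nat.lt_succ_of_le (List.le_max_of_le' 0 hmem le_rfl), rfl⟩,
      by simp [hk]⟩

lemma pairwise_readingList (l : List ℕ) :
    (readingList l).Pairwise fun x y => rowKey l y < rowKey l x := by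
  simp only [readingList, List.pairwise_flatten, List.mem_map, List.pairwise_map,
    List.pairwise_reverse]
  constructor
  · rintro _ ⟨v, _, rfl⟩
    refine List.pairwise_reverse.mpr
      ((List.pairwise_lt_range.sublist List.filter_sublist).imp_of_mem ?_)
    intro x y hx hy hxy
    simp only [List.mem_filter, List.mem_range, beq_iff_eq] at hx hy
    simp only [rowKey, Prod.Lex.toLex_lt_toLex]
    omega
  · refine List.pairwise_lt_range.imp fun hv x hx y hy => ?_
    simp only [List.mem_reverse, List.mem_filter, List.mem_range, beq_iff_eq] at hx hy
    simp only [rowKey, Prod.Lex.toLex_lt_toLex]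
    omega

lemma length_readingList (l : List ℕ) : (readingList l).length = l.length := by
  have hnodup : (readingList l).Nodup :=
    (pairwise_readingList l).imp fun h hxy => by subst hxy; exact lt_irrefl _ h
  simpa using ((List.perm_ext_iff_of_nodup hnodup List.nodup_range).mpr
    fun k => by rw [mem_readingList, List.mem_range]).length_eq

end DeltaCat

/-- Positions are 0-indexed: position `i` here is position `i + 1` in the 1-indexed statement. -/
theorem bseq_strict_incr_at_peaks (l : List ℕ) (hl : IsDyck l) :
    bAt l 0 = 0 ∧
      ∀ i, 1 ≤ i → i < l.length → IsPeak l ((readingList l).getD i 0) →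
        bAt l (i - 1) < bAt l i := by
  have hlen := length_readingList l
  have hsorted := pairwise_readingList l
  have hrow : ∀ j < l.length, j ∈ readingList l := fun j hj => mem_readingList.mpr hj
  constructor
  · have h0 : 0 < (readingList l).length := by
      rw [hlen]; exact List.length_pos_iff.mpr hl.1
    rw [bAt, List.getD_eq_getElem _ _ h0, bval_eq_card_bWindow, card_eq_zero, bWindow,
      filter_eq_empty_iff]
    exact fun j hj hwin =>
      hsorted.not_lt_apply_getElem_zero h0 (hrow j (mem_range.mp hj)) hwin.1
  · rintro i hi1 hi hpeak
    obtain ⟨i, rfl⟩ : ∃ p, i = p + 1 := ⟨i - 1, by omega⟩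
    have hi' : i + 1 < (readingList l).length := by rw [hlen]; exact hi
    rw [List.getD_eq_getElem _ _ hi'] at hpeak
    rw [bAt, bAt, Nat.add_sub_cancel, List.getD_eq_getElem _ _ hi',
      List.getD_eq_getElem _ _ (by omega)]
    exact hl.bval_lt_bval_of_isPeak hpeak (mem_readingList.mp (List.getElem_mem _))
      (List.pairwise_iff_getElem.mp hsorted i (i + 1) _ hi' i.lt_succ_self)
      fun j hj => hsorted.not_lt_lt_apply_getElem_succ hi' (hrow j hj)
end

section
/- Let a ≥ 1 and k, ℓ ≥ 0 be integers, let β be a composition, and set n = a + 1 + |β| + ℓ. Let A be the set of ∘-decorated Dyck paths (D,S) of size n with α^Rise(D,S) = (a+1, β), peak_∘(D,S) = k, rise_∘(D,S) = ℓ, and 1 ∉ S, and let B be the set of ∘-decorated Dyck paths (D',S') of size n − 1 with peak_∘(D',S') = k, rise_∘(D',S') = ℓ, and α^Rise(D',S') = (β, γ) for some composition γ ⊨ a. Then there exists a bijection Φ : A → B such that for every (D,S) ∈ A, dinv_∘(D,S) = dinv_∘(Φ(D,S)) + ℓ(β) and area_∘(D,S) = area_∘(Φ(D,S)) + a. -/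
open Finset

open DeltaCat

/-!
A path in `A` begins with a prime component `u` of size at least two (the part before its
first return to the diagonal), followed by the rest `v`. The rotation moves `u` behind `v`,
dropping its first row and lowering its other rows by one; decorations travel with their rows.
A row `i` of `u` and a row `j` of `v` exchange their order while `i` drops by one, so
`a_i = a_j` turns into `a'_j = a'_i + 1` and vice versa: double rises, peaks, the rows
counted by each `b'(k)`, the last highest row and all diagonal inversions not involving the
first row survive. The lost inversions pair the first row with the returns of `v` to the
diagonal, one per part of `β`; the area drops by one in each of the `|u| - 1` lowered rows,
except for the decorated double rises of `u`, which leaves `a`. Conversely, a path in `B` is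
cut at the start of its segment number `ℓ(β) + 1`, and the tail is lifted and put in front.
-/

namespace DeltaCat

/-! ### Entries of area sequences -/

theorem ent_eq_getElem {l : List ℕ} {i : ℕ} (h : i < l.length) : ent l i = l[i] :=
  List.getD_eq_getElem _ _ h

theorem ent_append_left {x : List ℕ} (y : List ℕ) {i : ℕ} (h : i < x.length) :
    ent (x ++ y) i = ent x i :=
  List.getD_append _ _ _ _ h

theorem ent_append_of_le (x y : List ℕ) {i : ℕ} (h : x.length ≤ i) :
    ent (x ++ y) i = ent y (i - x.length) :=
  List.getD_append_right _ _ _ _ h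

theorem ent_append_right (x y : List ℕ) (j : ℕ) : ent (x ++ y) (x.length + j) = ent y j := by
  rw [ent_append_of_le _ _ (by omega), Nat.add_sub_cancel_left]

theorem ent_of_length_le {l : List ℕ} {i : ℕ} (h : l.length ≤ i) : ent l i = 0 := by
  simp [ent, List.getD, List.getElem?_eq_none h]

theorem ent_cons_succ (a : ℕ) (l : List ℕ) (i : ℕ) : ent (a :: l) (i + 1) = ent l i := rfl

theorem ent_take {l : List ℕ} {c i : ℕ} (hi : i < c) : ent (l.take c) i = ent l i := by
  simp [ent, List.getD, hi]

theorem ent_drop (l : List ℕ) (c j : ℕ) : ent (l.drop c) j = ent l (c + j) := by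
  simp [ent, List.getD, List.getElem?_drop]

def lift (y : List ℕ) : List ℕ := 0 :: y.map (· + 1)

def unlift (u : List ℕ) : List ℕ := u.tail.map (· - 1)

theorem length_lift (y : List ℕ) : (lift y).length = y.length + 1 := by simp [lift]

theorem length_unlift (u : List ℕ) : (unlift u).length = u.length - 1 := by simp [unlift]

theorem ent_lift_succ {y : List ℕ} {j : ℕ} (h : j < y.length) :
    ent (lift y) (j + 1) = ent y j + 1 := by
  rw [lift, ent_cons_succ, ent_eq_getElem (by simpa using h), ent_eq_getElem h,
    List.getElem_map]

theorem ent_unlift (u : List ℕ) (j : ℕ) : ent (unlift u) j = ent u (j + 1) - 1 := by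
  cases u with
  | nil => rfl
  | cons a t => simpa [unlift, ent] using List.getD_map (l := t) (n := j) (d := 0) (· - 1)

theorem unlift_lift (y : List ℕ) : unlift (lift y) = y := by
  simp [unlift, lift, Function.comp_def]

theorem IsDyck.ent_le {l : List ℕ} (hd : IsDyck l) (i : ℕ) : ent l i ≤ i := by
  induction i with
  | zero => rw [hd.2.1]
  | succ i ih =>
    by_cases hi : i + 1 < l.length
    · have := hd.2.2 i (by omega) hi; omega
    · rw [ent_of_length_le (by omega)]; omega

theorem IsDyck.ent_succ_le {l : List ℕ} (hd : IsDyck l) (i : ℕ) :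
    ent l (i + 1) ≤ ent l i + 1 := by
  by_cases hi : i + 1 < l.length
  · exact hd.2.2 i (by omega) hi
  · rw [ent_of_length_le (by omega)]; omega

/-! ### Segments and the rise-touch composition -/

theorem mem_segStarts {l : List ℕ} {i : ℕ} : i ∈ segStarts l ↔ i < l.length ∧ ent l i = 0 := by
  simp [segStarts]

theorem nodup_segStarts (l : List ℕ) : (segStarts l).Nodup :=
  List.nodup_range.filter _

theorem segStarts_append (x y : List ℕ) :
    segStarts (x ++ y) = segStarts x ++ (segStarts y).map (x.length + ·) := by
  unfold segStarts
  rw [List.length_append, List.range_add, List.filter_append, List.filter_map]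
  congr 1
  · exact List.filter_congr fun i hi => by rw [ent_append_left y (List.mem_range.mp hi)]
  · exact congrArg _ (List.filter_congr fun j _ => by simp [ent_append_right])

theorem segStarts_eq_zero_cons {y : List ℕ} (hy : y ≠ []) (h0 : ent y 0 = 0) :
    ∃ G, segStarts y = 0 :: G := by
  obtain ⟨n, hn⟩ : ∃ n, y.length = n + 1 := Nat.exists_eq_succ_of_ne_zero (by simpa using hy)
  exact ⟨_, by rw [segStarts, hn, List.range_succ_eq_map, List.filter_cons_of_pos (by simpa)]⟩

theorem length_riseTouch (l : List ℕ) (S : Finset ℕ) :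
    (riseTouch l S).length = (segStarts l).length := by
  unfold riseTouch
  cases segStarts l <;> simp

structure IsPrime (x : List ℕ) : Prop where
  ne_nil : x ≠ []
  ent_zero : ent x 0 = 0
  ent_pos : ∀ i, 0 < i → i < x.length → 0 < ent x i

theorem IsPrime.segStarts_eq {x : List ℕ} (hx : IsPrime x) : segStarts x = [0] := by
  obtain ⟨G, hG⟩ := segStarts_eq_zero_cons hx.ne_nil hx.ent_zero
  suffices G = [] by rw [hG, this]
  refine List.eq_nil_iff_forall_not_mem.mpr fun i hi => ?_
  have hi' := mem_segStarts.mp (hG ▸ List.mem_cons_of_mem 0 hi)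
  have hne : i ≠ 0 := by
    rintro rfl
    have := nodup_segStarts x
    rw [hG] at this
    exact List.nodup_cons.mp this |>.1 hi
  exact (hx.ent_pos i (Nat.pos_of_ne_zero hne) hi'.1).ne' hi'.2

theorem mem_riseSet {l : List ℕ} {S : Finset ℕ} {i : ℕ} : i ∈ riseSet l S ↔ i ∈ S ∧ IsRise l i :=
  Finset.mem_filter

theorem mem_peakSet {l : List ℕ} {S : Finset ℕ} {i : ℕ} : i ∈ peakSet l S ↔ i ∈ S ∧ IsPeak l i :=
  Finset.mem_filter

theorem lt_length_of_mem_riseSet {l : List ℕ} {S : Finset ℕ} {i : ℕ} (hi : i ∈ riseSet l S) :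
    i + 1 < l.length :=
  (mem_riseSet.mp hi).2.1

theorem card_riseSet_le (l : List ℕ) (S : Finset ℕ) : (riseSet l S).card ≤ l.length - 1 := by
  simpa using Finset.card_le_card (s := riseSet l S) (t := Finset.range (l.length - 1))
    fun i hi => Finset.mem_range.mpr (by have := lt_length_of_mem_riseSet hi; omega)

theorem riseSet_nil (S : Finset ℕ) : riseSet [] S = ∅ := by
  ext; simp [mem_riseSet, IsRise]

theorem isRise_append_left {x y : List ℕ} (hy : ent y 0 = 0) {i : ℕ} (hi : i < x.length) :
    IsRise (x ++ y) i ↔ IsRise x i := by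
  unfold IsRise
  rw [ent_append_left y hi, List.length_append]
  by_cases h : i + 1 < x.length
  · rw [ent_append_left y h]; omega
  · rw [ent_append_of_le x y (by omega), show i + 1 - x.length = 0 by omega, hy]; omega

theorem isRise_append_right (x y : List ℕ) (j : ℕ) :
    IsRise (x ++ y) (x.length + j) ↔ IsRise y j := by
  unfold IsRise
  rw [List.length_append, show x.length + j + 1 = x.length + (j + 1) by ring, ent_append_right,
    ent_append_right]
  omega

def shiftDown (S : Finset ℕ) (c : ℕ) : Finset ℕ := (S.filter (c ≤ ·)).image (· - c)

theorem mem_shiftDown {S : Finset ℕ} {c j : ℕ} : j ∈ shiftDown S c ↔ c + j ∈ S := by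
  simp only [shiftDown, Finset.mem_image, Finset.mem_filter]
  constructor
  · rintro ⟨s, ⟨hs, hcs⟩, rfl⟩
    rwa [Nat.add_sub_cancel' hcs]
  · exact fun h => ⟨c + j, ⟨h, by omega⟩, by omega⟩

theorem riseSet_append {x y : List ℕ} (S : Finset ℕ) (hy : ent y 0 = 0) :
    riseSet (x ++ y) S = riseSet x (S.filter (· < x.length)) ∪
      (riseSet y (shiftDown S x.length)).image (x.length + ·) := by
  ext i
  by_cases hi : i < x.length
  · simp only [Finset.mem_union, mem_riseSet, Finset.mem_filter, Finset.mem_image,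
      isRise_append_left hy hi, hi, and_true]
    exact ⟨Or.inl, by rintro (h | ⟨j, -, rfl⟩) <;> [exact h; omega]⟩
  · obtain ⟨j, rfl⟩ := Nat.exists_eq_add_of_le (not_lt.mp hi)
    simp [mem_riseSet, mem_shiftDown, isRise_append_right]

theorem card_riseSet_append {x y : List ℕ} (S : Finset ℕ) (hy : ent y 0 = 0) :
    (riseSet (x ++ y) S).card =
      (riseSet x (S.filter (· < x.length))).card + (riseSet y (shiftDown S x.length)).card := by
  rw [riseSet_append S hy, Finset.card_union_of_disjoint, Finset.card_image_of_injective _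
    (add_right_injective _)]
  refine Finset.disjoint_left.mpr fun i hi hi' => ?_
  obtain ⟨j, -, rfl⟩ := Finset.mem_image.mp hi'
  have := lt_length_of_mem_riseSet hi
  omega

def riseCount (l : List ℕ) (S : Finset ℕ) (cur next : ℕ) : ℕ :=
  ((riseSet l S).filter (fun i => cur ≤ i ∧ i < next)).card

theorem riseTouch_eq_zipWith (l : List ℕ) (S : Finset ℕ) :
    riseTouch l S = List.zipWith (fun cur next => next - cur - riseCount l S cur next)
      (segStarts l) ((segStarts l).drop 1 ++ [l.length]) := rfl

theorem riseCount_append_left {x y : List ℕ} (S : Finset ℕ) (hy : ent y 0 = 0) {cur next : ℕ}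
    (h : next ≤ x.length) :
    riseCount (x ++ y) S cur next = riseCount x (S.filter (· < x.length)) cur next := by
  unfold riseCount
  congr 1
  ext i
  rw [riseSet_append S hy]
  simp only [Finset.mem_filter, Finset.mem_union, Finset.mem_image]
  constructor
  · rintro ⟨h1 | ⟨j, -, rfl⟩, h2⟩
    · exact ⟨h1, h2⟩
    · omega
  · exact fun ⟨h1, h2⟩ => ⟨Or.inl h1, h2⟩

theorem riseCount_append_right {x y : List ℕ} (S : Finset ℕ) (hy : ent y 0 = 0) (a b : ℕ) :
    riseCount (x ++ y) S (x.length + a) (x.length + b) =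
      riseCount y (shiftDown S x.length) a b := by
  unfold riseCount
  rw [riseSet_append S hy, Finset.filter_union, Finset.filter_image,
    Finset.filter_false_of_mem fun i hi => by have := lt_length_of_mem_riseSet hi; omega,
    Finset.empty_union, Finset.card_image_of_injective _ (add_right_injective _)]
  congr 1
  exact Finset.filter_congr fun j _ => by omega

theorem zipWith_congr_of_mem {α β γ : Type*} {f g : α → β → γ} {la : List α} {lb : List β}
    (h : ∀ a ∈ la, ∀ b ∈ lb, f a b = g a b) : List.zipWith f la lb = List.zipWith g la lb := by
  rw [← List.map_uncurry_zip_eq_zipWith, ← List.map_uncurry_zip_eq_zipWith]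
  exact List.map_congr_left fun ⟨a, b⟩ hab =>
    h a (List.of_mem_zip hab).1 b (List.of_mem_zip hab).2

theorem zipWith_append_cons_drop {α β : Type*} (f : α → α → β) (F T : List α) (b e : α) :
    List.zipWith f (F ++ b :: T) ((F ++ b :: T).drop 1 ++ [e]) =
      List.zipWith f F (F.drop 1 ++ [b]) ++ List.zipWith f (b :: T) (T ++ [e]) := by
  cases F with
  | nil => simp
  | cons c F =>
    rw [List.cons_append, List.drop_one, List.tail_cons, List.drop_one, List.tail_cons,
      show F ++ b :: T ++ [e] = (F ++ [b]) ++ (T ++ [e]) by simp, ← List.cons_append,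
      List.zipWith_append (by simp)]

theorem riseTouch_append {x y : List ℕ} (S : Finset ℕ) (hy : ent y 0 = 0) :
    riseTouch (x ++ y) S =
      riseTouch x (S.filter (· < x.length)) ++ riseTouch y (shiftDown S x.length) := by
  rcases eq_or_ne y [] with rfl | hyne
  · have h := riseSet_append (x := x) (y := []) S rfl
    rw [List.append_nil, riseSet_nil, Finset.image_empty, Finset.union_empty] at h
    rw [List.append_nil, show riseTouch [] (shiftDown S x.length) = [] from rfl, List.append_nil]
    unfold riseTouch
    rw [h]
  obtain ⟨G, hG⟩ := segStarts_eq_zero_cons hyne hy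
  rw [riseTouch_eq_zipWith, riseTouch_eq_zipWith x, riseTouch_eq_zipWith y, segStarts_append, hG,
    List.map_cons, add_zero, List.length_append, zipWith_append_cons_drop]
  congr 1
  · refine zipWith_congr_of_mem fun cur _ next hnext => ?_
    have hnext : next ≤ x.length := by
      rcases List.mem_append.mp hnext with h | h
      · exact (mem_segStarts.mp (List.mem_of_mem_drop h)).1.le
      · simp_all
    rw [riseCount_append_left S hy hnext]
  · rw [List.drop_one, List.tail_cons,
      show x.length :: G.map (x.length + ·) = (0 :: G).map (x.length + ·) by simp,
      show G.map (x.length + ·) ++ [x.length + y.length] = (G ++ [y.length]).map (x.length + ·)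
        by simp, List.zipWith_map]
    congr 1
    funext a b
    rw [riseCount_append_right S hy]
    omega

theorem IsPrime.riseTouch_append {u v : List ℕ} (hu : IsPrime u) (T : Finset ℕ)
    (hv : ent v 0 = 0) :
    riseTouch (u ++ v) T = (u.length - (riseSet u (T.filter (· < u.length))).card) ::
      riseTouch v (shiftDown T u.length) := by
  rw [DeltaCat.riseTouch_append T hv, riseTouch_eq_zipWith u, hu.segStarts_eq]
  simp only [List.drop_succ_cons, List.drop_zero, List.nil_append, List.zipWith_cons_cons,
    List.zipWith_nil_left, Nat.sub_zero, riseCount, List.singleton_append]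
  congr 3
  exact Finset.filter_true_of_mem fun i hi => ⟨i.zero_le, by
    have := lt_length_of_mem_riseSet hi; omega⟩

/-- The first row after the first one in which the path returns to the diagonal (the length of
the path if there is none). -/
def firstReturn (l : List ℕ) : ℕ := l.tail.findIdx (· == 0) + 1

theorem firstReturn_le_length {l : List ℕ} (hl : l ≠ []) : firstReturn l ≤ l.length := by
  have := List.length_pos_iff.mpr hl
  have := List.findIdx_le_length (p := (· == 0)) (xs := l.tail)
  rw [List.length_tail] at this
  unfold firstReturn
  omega

theorem ent_ne_zero_of_lt_firstReturn {l : List ℕ} {i : ℕ} (hi0 : 0 < i)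
    (hi : i < firstReturn l) : ent l i ≠ 0 := by
  obtain ⟨j, rfl⟩ := Nat.exists_eq_add_of_lt hi0
  have hj : j < l.tail.findIdx (· == 0) := by unfold firstReturn at hi; omega
  have hlen := hj.trans_le List.findIdx_le_length
  cases l with
  | nil => simp at hlen
  | cons a t =>
    have := List.not_of_lt_findIdx hj
    simp only [List.tail_cons, beq_eq_false_iff_ne] at this
    rwa [zero_add, ent_cons_succ, ent_eq_getElem (by simpa using hlen)]

theorem ent_firstReturn (l : List ℕ) : ent l (firstReturn l) = 0 := by
  by_cases h : l.tail.findIdx (· == 0) < l.tail.length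
  · have := List.findIdx_getElem (w := h)
    cases l with
    | nil => simp at h
    | cons a t =>
      rw [firstReturn, ent_cons_succ, ent_eq_getElem (by simpa using h)]
      simpa using this
  · exact ent_of_length_le (by unfold firstReturn; simp only [List.length_tail] at h; omega)

theorem firstReturn_eq_of {l : List ℕ} {c : ℕ} (hc0 : 0 < c)
    (hpos : ∀ i, 0 < i → i < c → ent l i ≠ 0) (hc : ent l c = 0) : firstReturn l = c := by
  rcases lt_trichotomy (firstReturn l) c with hlt | heq | hgt
  · exact absurd (ent_firstReturn l) (hpos _ (Nat.succ_pos _) hlt)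
  · exact heq
  · exact absurd hc (ent_ne_zero_of_lt_firstReturn hc0 hgt)

theorem length_take_firstReturn {l : List ℕ} (hl : l ≠ []) :
    (l.take (firstReturn l)).length = firstReturn l :=
  List.length_take_of_le (firstReturn_le_length hl)

theorem isPrime_take_firstReturn {l : List ℕ} (hl : l ≠ []) (h0 : ent l 0 = 0) :
    IsPrime (l.take (firstReturn l)) where
  ne_nil h := by rcases List.take_eq_nil_iff.mp h with h | h <;> simp_all [firstReturn]
  ent_zero := by rw [ent_take (by simp [firstReturn]), h0]
  ent_pos i hi0 hi := by
    rw [length_take_firstReturn hl] at hi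
    rw [ent_take hi]
    exact Nat.pos_of_ne_zero (ent_ne_zero_of_lt_firstReturn hi0 hi)

theorem ent_drop_firstReturn (l : List ℕ) : ent (l.drop (firstReturn l)) 0 = 0 := by
  rw [ent_drop, add_zero, ent_firstReturn]

theorem riseTouch_eq_cons_firstReturn {l : List ℕ} (hl : l ≠ []) (h0 : ent l 0 = 0)
    (S : Finset ℕ) :
    riseTouch l S = (firstReturn l -
        (riseSet (l.take (firstReturn l)) (S.filter (· < firstReturn l))).card) ::
      riseTouch (l.drop (firstReturn l)) (shiftDown S (firstReturn l)) := by
  conv_lhs => rw [← List.take_append_drop (firstReturn l) l]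
  rw [(isPrime_take_firstReturn hl h0).riseTouch_append S (ent_drop_firstReturn l),
    length_take_firstReturn hl]

theorem card_riseSet_eq_add_firstReturn {l : List ℕ} (hl : l ≠ []) (S : Finset ℕ) :
    (riseSet l S).card =
      (riseSet (l.take (firstReturn l)) (S.filter (· < firstReturn l))).card +
        (riseSet (l.drop (firstReturn l)) (shiftDown S (firstReturn l))).card := by
  conv_lhs => rw [← List.take_append_drop (firstReturn l) l]
  rw [card_riseSet_append S (ent_drop_firstReturn l), length_take_firstReturn hl]

theorem card_riseSet_take_firstReturn_lt {l : List ℕ} (hl : l ≠ []) (S : Finset ℕ) :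
    (riseSet (l.take (firstReturn l)) S).card < firstReturn l := by
  have := card_riseSet_le (l.take (firstReturn l)) S
  rw [length_take_firstReturn hl] at this
  have : 0 < firstReturn l := Nat.succ_pos _
  omega

theorem riseTouch_sum_add_card_riseSet {l : List ℕ} (S : Finset ℕ) (h0 : ent l 0 = 0) :
    (riseTouch l S).sum + (riseSet l S).card = l.length := by
  induction hn : l.length using Nat.strong_induction_on generalizing l S with
  | _ n ih =>
  rcases eq_or_ne l [] with rfl | hl
  · simp [← hn, riseTouch, segStarts, riseSet_nil]
  have hc := firstReturn_le_length hl
  have hr := card_riseSet_take_firstReturn_lt hl (S.filter (· < firstReturn l))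
  have ih' := ih _ (by simp; omega) (shiftDown S (firstReturn l)) (ent_drop_firstReturn l) rfl
  rw [List.length_drop] at ih'
  rw [riseTouch_eq_cons_firstReturn hl h0, List.sum_cons, card_riseSet_eq_add_firstReturn hl]
  omega

theorem pos_of_mem_riseTouch {l : List ℕ} {S : Finset ℕ} (h0 : ent l 0 = 0) :
    ∀ p ∈ riseTouch l S, 0 < p := by
  induction hn : l.length using Nat.strong_induction_on generalizing l S with
  | _ n ih =>
  rcases eq_or_ne l [] with rfl | hl
  · simp [riseTouch, segStarts]
  have hr := card_riseSet_take_firstReturn_lt hl (S.filter (· < firstReturn l))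
  rw [riseTouch_eq_cons_firstReturn hl h0]
  rintro p (_ | ⟨_, hp⟩)
  · omega
  · exact ih _ (by have := firstReturn_le_length hl; simp; omega) (ent_drop_firstReturn l) rfl p hp

def splitPoint (l : List ℕ) (k : ℕ) : ℕ := (segStarts l).getD k 0

theorem splitPoint_append {x y : List ℕ} (hy : y ≠ []) (hy0 : ent y 0 = 0) :
    splitPoint (x ++ y) (segStarts x).length = x.length := by
  obtain ⟨G, hG⟩ := segStarts_eq_zero_cons hy hy0
  rw [splitPoint, segStarts_append, hG, List.getD_append_right _ _ _ _ le_rfl, Nat.sub_self,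
    List.map_cons, List.getD_cons_zero, add_zero]

theorem splitPoint_spec {l : List ℕ} {k : ℕ} (hk : k < (segStarts l).length) :
    splitPoint l k < l.length ∧ ent l (splitPoint l k) = 0 ∧
      (segStarts (l.take (splitPoint l k))).length = k := by
  have hp : splitPoint l k = (segStarts l)[k] := List.getD_eq_getElem _ _ hk
  obtain ⟨hlt, hz⟩ := mem_segStarts.mp (hp ▸ List.getElem_mem hk)
  refine ⟨hlt, hz, ?_⟩
  set p := splitPoint l k
  obtain ⟨G, hG⟩ := segStarts_eq_zero_cons (y := l.drop p) (by simp; omega)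
    (by rwa [ent_drop, add_zero])
  have hsplit := segStarts_append (l.take p) (l.drop p)
  rw [List.take_append_drop, hG, List.length_take_of_le hlt.le, List.map_cons, add_zero] at hsplit
  have hA : (segStarts (l.take p)).length < (segStarts l).length := by
    rw [hsplit]; simp
  have : (segStarts l)[(segStarts (l.take p)).length] = (segStarts l)[k] := by
    rw [← hp]
    simp only [hsplit, List.getElem_append_right le_rfl, Nat.sub_self, List.getElem_cons_zero]
  exact (nodup_segStarts l).getElem_inj_iff.mp this

/-! ### Diagonal inversions, `b'`, area and the last highest row -/

theorem mem_dinvPairs {l : List ℕ} {i j : ℕ} :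
    (i, j) ∈ dinvPairs l ↔
      i < j ∧ j < l.length ∧ (ent l i = ent l j ∨ ent l i = ent l j + 1) := by
  simp only [dinvPairs, Finset.mem_filter, Finset.mem_product, Finset.mem_range]
  omega

def IsBPartner (l : List ℕ) (k j : ℕ) : Prop :=
  (k < j ∧ ent l j = ent l k) ∨ (j < k ∧ ent l j = ent l k + 1)

instance (l : List ℕ) (k : ℕ) : DecidablePred (IsBPartner l k) :=
  fun _ => by unfold IsBPartner; infer_instance

theorem bval_eq_card (l : List ℕ) (k : ℕ) :
    bval l k = ((Finset.range l.length).filter (IsBPartner l k)).card := by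
  unfold bval IsBPartner
  rw [Finset.filter_or, Finset.card_union_of_disjoint]
  exact Finset.disjoint_filter.mpr fun _ _ h h' => by omega

def sortPair (a b : ℕ) : ℕ × ℕ := (min a b, max a b)

theorem sortPair_of_lt {a b : ℕ} (h : a < b) : sortPair a b = (a, b) := by
  simp [sortPair, h.le]

theorem sortPair_min_max (f : ℕ → ℕ) (a b : ℕ) :
    sortPair (f (min a b)) (f (max a b)) = sortPair (f a) (f b) := by
  rcases le_total a b with h | h <;> simp [sortPair, h, min_comm, max_comm]

theorem sortPair_mem_dinvPairs {l : List ℕ} {a b : ℕ} :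
    sortPair a b ∈ dinvPairs l ↔
      a ≠ b ∧ max a b < l.length ∧ (IsBPartner l a b ∨ IsBPartner l b a) := by
  rw [sortPair, mem_dinvPairs, IsBPartner, IsBPartner]
  rcases le_total a b with h | h <;> simp only [min_eq_left, max_eq_right,
    min_eq_right, max_eq_left, h] <;> omega

/-- Every diagonal inversion is counted by `bval` at exactly one of its two rows. -/
theorem sum_bval_eq_dinv (l : List ℕ) : ∑ k ∈ Finset.range l.length, bval l k = dinv l := by
  simp_rw [bval_eq_card]
  rw [← Finset.card_sigma]
  refine Finset.card_bij (fun x _ => sortPair x.1 x.2) ?_ ?_ ?_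
  · rintro ⟨k, j⟩ hx
    dsimp only
    simp only [Finset.mem_sigma, Finset.mem_filter, Finset.mem_range] at hx
    refine sortPair_mem_dinvPairs.mpr ⟨?_, by omega, Or.inl hx.2.2⟩
    rcases hx.2.2 with h | h <;> omega
  · rintro ⟨k, j⟩ hx ⟨k', j'⟩ hx' he
    simp only [Finset.mem_sigma, Finset.mem_filter, IsBPartner] at hx hx'
    dsimp only at he
    simp only [sortPair, Prod.mk.injEq] at he
    obtain ⟨rfl, rfl⟩ | ⟨rfl, rfl⟩ : (k = k' ∧ j = j') ∨ (k = j' ∧ j = k') := by omega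
    · rfl
    · omega
  · rintro ⟨i, j⟩ hp
    obtain ⟨hij, hj, hrel⟩ := mem_dinvPairs.mp hp
    rcases hrel with h | h
    · refine ⟨⟨i, j⟩, ?_, sortPair_of_lt hij⟩
      simp only [Finset.mem_sigma, Finset.mem_filter, Finset.mem_range, IsBPartner]
      omega
    · refine ⟨⟨j, i⟩, ?_, by simp [sortPair, hij.le]⟩
      simp only [Finset.mem_sigma, Finset.mem_filter, Finset.mem_range, IsBPartner]
      omega

theorem sum_bval_le_dinv (l : List ℕ) {T : Finset ℕ} (hT : ∀ k ∈ T, k < l.length) :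
    ∑ k ∈ T, bval l k ≤ dinv l :=
  sum_bval_eq_dinv l ▸ Finset.sum_le_sum_of_subset fun k hk => Finset.mem_range.mpr (hT k hk)

theorem area_eq_sum_ent (l : List ℕ) : area l = ∑ i ∈ Finset.range l.length, ent l i := by
  induction l with
  | nil => rfl
  | cons a t ih =>
    rw [area, List.sum_cons, List.length_cons, Finset.sum_range_succ', ← area, ih]
    simp only [ent_cons_succ]
    exact Nat.add_comm _ _

theorem sum_ent_succ_riseSet_le_area (l : List ℕ) (S : Finset ℕ) :
    ∑ i ∈ riseSet l S, ent l (i + 1) ≤ area l := by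
  rw [area_eq_sum_ent, ← Finset.sum_image (g := (· + 1)) fun _ _ _ _ h => Nat.succ_injective h]
  exact Finset.sum_le_sum_of_subset fun j hj => by
    obtain ⟨i, hi, rfl⟩ := Finset.mem_image.mp hj
    exact Finset.mem_range.mpr (lt_length_of_mem_riseSet hi)

theorem sum_map_sub_one_add_length {l : List ℕ} (hl : ∀ x ∈ l, 0 < x) :
    (l.map (· - 1)).sum + l.length = l.sum := by
  induction l with
  | nil => rfl
  | cons a t ih =>
    have := hl a (by simp)
    simp only [List.map_cons, List.sum_cons, List.length_cons]
    have := ih fun x hx => hl x (by simp [hx])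
    omega

def KeyLt (l : List ℕ) (i j : ℕ) : Prop :=
  ent l i < ent l j ∨ (ent l i = ent l j ∧ i < j)

theorem lastMaxRow_spec {l : List ℕ} (hl : l ≠ []) :
    lastMaxRow l < l.length ∧ ∀ j < l.length, j ≠ lastMaxRow l → KeyLt l j (lastMaxRow l) := by
  set s := (Finset.range l.length).filter
    (fun i => ∀ j ∈ Finset.range l.length, ent l j ≤ ent l i)
  have hne : s.Nonempty := by
    obtain ⟨b, hb, hmax⟩ := Finset.exists_max_image (Finset.range l.length) (ent l)
      (by simpa using hl)
    exact ⟨b, Finset.mem_filter.mpr ⟨hb, hmax⟩⟩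
  have hmem : lastMaxRow l ∈ s := by
    rw [lastMaxRow, ← Finset.sup'_eq_sup hne id]
    exact s.max'_mem hne
  obtain ⟨hlt, hmax⟩ := Finset.mem_filter.mp hmem
  refine ⟨Finset.mem_range.mp hlt, fun j hj hjm => ?_⟩
  have hle := hmax j (Finset.mem_range.mpr hj)
  by_contra hnot
  have hjs : j ∈ s := Finset.mem_filter.mpr ⟨Finset.mem_range.mpr hj, fun i hi => by
    have := hmax i hi; unfold KeyLt at hnot; omega⟩
  have := Finset.le_sup (f := id) hjs
  unfold KeyLt at hnot
  change j ≤ lastMaxRow l at this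
  omega

theorem lastMaxRow_eq_of_forall_keyLt {l : List ℕ} {k : ℕ} (hk : k < l.length)
    (h : ∀ j < l.length, j ≠ k → KeyLt l j k) : lastMaxRow l = k := by
  obtain ⟨hm, hmax⟩ := lastMaxRow_spec (l := l) (by rintro rfl; simp at hk)
  by_contra hne
  have h1 := h _ hm hne
  have h2 := hmax k hk (Ne.symm hne)
  unfold KeyLt at h1 h2
  omega

theorem mem_decPaths {n : ℕ} {l : List ℕ} {S : Finset ℕ} :
    (l, S) ∈ decPaths n ↔ IsDyck l ∧ l.length = n ∧ ValidDec l S := by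
  simp only [decPaths, allSeqs, Finset.mem_filter, Finset.mem_product, Finset.mem_image,
    Finset.mem_univ, true_and, Finset.mem_powerset]
  constructor
  · rintro ⟨⟨⟨w, hw⟩, -⟩, hd, hv⟩
    exact ⟨hd, by simp [← hw], hv⟩
  · rintro ⟨hd, hlen, hv⟩
    refine ⟨⟨⟨fun i => ⟨l[i.val], ?_⟩, ?_⟩, fun s hs => ?_⟩, hd, hv⟩
    · have := hd.ent_le i
      rw [ent_eq_getElem (by omega)] at this
      omega
    · exact List.ext_getElem (by simp [hlen]) fun i _ _ => by simp
    · exact Finset.mem_range.mpr (hlen ▸ hv.1 s hs)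

theorem subset_Ioo_of_mem_decPaths {l : List ℕ} {T : Finset ℕ} {n : ℕ}
    (hmem : (l, T) ∈ decPaths n) (h0 : 0 ∉ T) : (T : Set ℕ) ⊆ Set.Ioo 0 l.length :=
  fun s hs => ⟨Nat.pos_of_ne_zero fun hs0 => h0 (hs0 ▸ hs), (mem_decPaths.mp hmem).2.2.1 s hs⟩

/-! ### Cyclic rotation -/

def rotate (u v : List ℕ) : List ℕ := v ++ unlift u

def rotateIdx (u v : List ℕ) (i : ℕ) : ℕ :=
  if i < u.length then i + v.length - 1 else i - u.length

def unrotateIdx (u v : List ℕ) (j : ℕ) : ℕ :=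
  if j < v.length then j + u.length else j - v.length + 1

section Indices

variable {u v : List ℕ} {i j : ℕ}

theorem rotateIdx_lt (hu : u ≠ []) (hi0 : 0 < i) (hi : i < u.length + v.length) :
    rotateIdx u v i + 1 < u.length + v.length := by
  have := List.length_pos_iff.mpr hu
  unfold rotateIdx; split <;> omega

theorem unrotateIdx_mem_Ioo (hu : u ≠ []) (hj : j + 1 < u.length + v.length) :
    unrotateIdx u v j ∈ Set.Ioo 0 (u.length + v.length) := by
  have := List.length_pos_iff.mpr hu
  unfold unrotateIdx; split <;> exact ⟨by omega, by omega⟩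

theorem unrotateIdx_rotateIdx (hi0 : 0 < i) (hi : i < u.length + v.length) :
    unrotateIdx u v (rotateIdx u v i) = i := by
  unfold rotateIdx unrotateIdx; split <;> split <;> omega

theorem rotateIdx_unrotateIdx (hj : j + 1 < u.length + v.length) :
    rotateIdx u v (unrotateIdx u v j) = j := by
  unfold rotateIdx unrotateIdx; split <;> split <;> omega

theorem rotateIdx_injOn : Set.InjOn (rotateIdx u v) (Set.Ioo 0 (u.length + v.length)) :=
  fun i hi i' hi' he => by
    rw [← unrotateIdx_rotateIdx hi.1 hi.2, he, unrotateIdx_rotateIdx hi'.1 hi'.2]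

theorem card_image_rotateIdx {T : Finset ℕ}
    (hT : (T : Set ℕ) ⊆ Set.Ioo 0 (u.length + v.length)) :
    (T.image (rotateIdx u v)).card = T.card :=
  Finset.card_image_of_injOn (rotateIdx_injOn.mono hT)

theorem image_unrotateIdx_rotateIdx {T : Finset ℕ}
    (hT : (T : Set ℕ) ⊆ Set.Ioo 0 (u.length + v.length)) :
    (T.image (rotateIdx u v)).image (unrotateIdx u v) = T := by
  rw [Finset.image_image]
  conv_rhs => rw [← Finset.image_id (s := T)]
  exact Finset.image_congr fun i hi => unrotateIdx_rotateIdx (hT hi).1 (hT hi).2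

theorem image_rotateIdx_unrotateIdx {S : Finset ℕ}
    (hS : ∀ j ∈ S, j + 1 < u.length + v.length) :
    (S.image (unrotateIdx u v)).image (rotateIdx u v) = S := by
  rw [Finset.image_image]
  conv_rhs => rw [← Finset.image_id (s := S)]
  exact Finset.image_congr fun j hj => rotateIdx_unrotateIdx (hS j hj)

theorem filter_image_rotateIdx {T : Finset ℕ}
    (hT : (T : Set ℕ) ⊆ Set.Ioo 0 (u.length + v.length)) :
    (T.image (rotateIdx u v)).filter (· < v.length) = shiftDown T u.length := by
  ext j
  simp only [Finset.mem_filter, Finset.mem_image, mem_shiftDown]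
  constructor
  · rintro ⟨⟨s, hs, rfl⟩, hlt⟩
    have := (hT hs).1
    unfold rotateIdx at hlt ⊢
    split at hlt
    · omega
    · rwa [if_neg ‹_›, Nat.add_sub_cancel' (by omega)]
  · intro hs
    have := (hT hs).2
    refine ⟨⟨_, hs, ?_⟩, by omega⟩
    rw [rotateIdx, if_neg (by omega), Nat.add_sub_cancel_left]

end Indices

theorem length_rotate {u : List ℕ} (hu : u ≠ []) (v : List ℕ) :
    (rotate u v).length + 1 = u.length + v.length := by
  have := List.length_pos_iff.mpr hu
  simp only [rotate, List.length_append, length_unlift]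
  omega

theorem ent_rotate_of_lt (u : List ℕ) {v : List ℕ} {j : ℕ} (hj : j < v.length) :
    ent (rotate u v) j = ent (u ++ v) (u.length + j) := by
  rw [rotate, ent_append_left _ hj, ent_append_right]

theorem ent_rotate_of_le {u v : List ℕ} {j : ℕ} (hj : v.length ≤ j)
    (hj' : j + 1 < u.length + v.length) :
    ent (rotate u v) j = ent (u ++ v) (j - v.length + 1) - 1 := by
  rw [rotate, ent_append_of_le _ _ hj, ent_unlift, ent_append_left _ (by omega)]

theorem lift_unlift {u : List ℕ} (hu : IsPrime u) : lift (unlift u) = u := by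
  obtain _ | ⟨a, t⟩ := u
  · exact absurd rfl hu.ne_nil
  have ha : a = 0 := hu.ent_zero
  subst ha
  simp only [lift, unlift, List.tail_cons, List.map_map, List.cons.injEq, true_and]
  refine List.ext_getElem (by simp) fun i _ hi => ?_
  have := hu.ent_pos (i + 1) (by omega) (by simpa using hi)
  rw [ent_cons_succ, ent_eq_getElem hi] at this
  simp only [List.getElem_map, Function.comp_apply]
  omega

theorem rotate_lift_drop_take (l : List ℕ) (s : ℕ) :
    rotate (lift (l.drop s)) (l.take s) = l := by
  rw [rotate, unlift_lift, List.take_append_drop]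

structure IsPrimeSplit (u v : List ℕ) : Prop where
  prime : IsPrime u
  two_le_length : 2 ≤ u.length
  ent_zero_right : ent v 0 = 0
  isDyck : IsDyck (u ++ v)

theorem isPrimeSplit_take_drop {l : List ℕ} {S : Finset ℕ} {a : ℕ} {β : List ℕ}
    (hd : IsDyck l) (ha : 1 ≤ a) (hrt : riseTouch l S = (a + 1) :: β) :
    IsPrimeSplit (l.take (firstReturn l)) (l.drop (firstReturn l)) where
  prime := isPrime_take_firstReturn hd.1 hd.2.1
  two_le_length := by
    rw [riseTouch_eq_cons_firstReturn hd.1 hd.2.1, List.cons.injEq] at hrt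
    rw [length_take_firstReturn hd.1]
    omega
  ent_zero_right := ent_drop_firstReturn l
  isDyck := by rwa [List.take_append_drop]

theorem isDyck_lift_append {x y : List ℕ} (hd : IsDyck (x ++ y)) (hy : y ≠ [])
    (hy0 : ent y 0 = 0) : IsDyck (lift y ++ x) := by
  have hyl := List.length_pos_iff.mpr hy
  have e0 : ent (lift y ++ x) 0 = 0 := by rw [ent_append_left _ (by simp [length_lift])]; rfl
  have e1 : ∀ j < y.length, ent (lift y ++ x) (j + 1) = ent (x ++ y) (x.length + j) + 1 :=
    fun j hj => by
      rw [ent_append_left _ (by simp [length_lift]; omega), ent_lift_succ hj, ent_append_right]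
  have e2 : ∀ j < x.length, ent (lift y ++ x) (y.length + 1 + j) = ent (x ++ y) j := fun j hj => by
    rw [← length_lift, ent_append_right, ent_append_left _ hj]
  refine ⟨by simp [lift], e0, fun i _ hi => ?_⟩
  simp only [List.length_append, length_lift] at hi
  rcases lt_trichotomy i y.length with hiy | rfl | hiy
  · rw [e1 i hiy]
    rcases Nat.eq_zero_or_pos i with rfl | hi0
    · rw [e0, add_zero, ent_append_of_le _ _ le_rfl, Nat.sub_self, hy0]
    · obtain ⟨j, rfl⟩ := Nat.exists_eq_add_of_lt hi0
      rw [zero_add, e1 j (by omega)]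
      have := hd.ent_succ_le (x.length + j)
      rw [add_assoc] at this
      omega
  · rw [show y.length + 1 = y.length + 1 + 0 by rfl, e2 0 (by omega), hd.2.1]
    omega
  · obtain ⟨j, rfl⟩ := Nat.exists_eq_add_of_lt hiy
    rw [show y.length + j + 1 = y.length + 1 + j by ring,
      show y.length + 1 + j + 1 = y.length + 1 + (j + 1) by ring, e2 j (by omega),
      e2 (j + 1) (by omega)]
    exact hd.ent_succ_le j

theorem isPrimeSplit_lift {x y : List ℕ} (hd : IsDyck (x ++ y)) (hy : y ≠ [])
    (hy0 : ent y 0 = 0) : IsPrimeSplit (lift y) x where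
  prime := ⟨by simp [lift], rfl, fun i hi0 hi => by
    obtain ⟨j, rfl⟩ := Nat.exists_eq_add_of_lt hi0
    rw [length_lift] at hi
    rw [zero_add, ent_lift_succ (by omega)]
    omega⟩
  two_le_length := by rw [length_lift]; have := List.length_pos_iff.mpr hy; omega
  ent_zero_right := by
    rcases Nat.eq_zero_or_pos x.length with h0 | h0
    · exact ent_of_length_le h0.le
    · rw [← ent_append_left y h0]; exact hd.2.1
  isDyck := isDyck_lift_append hd hy hy0

/-! ### Statistics of the rotated path -/

namespace IsPrimeSplit

variable {u v : List ℕ} (h : IsPrimeSplit u v)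
include h

theorem ne_nil : u ≠ [] := h.prime.ne_nil

theorem ent_zero : ent (u ++ v) 0 = 0 := h.isDyck.2.1

theorem ent_one : ent u 1 = 1 := by
  have hu2 := h.two_le_length
  have hstep := h.isDyck.ent_succ_le 0
  rw [h.ent_zero, zero_add, ent_append_left _ (by omega)] at hstep
  have := h.prime.ent_pos 1 one_pos (by omega)
  omega

theorem ent_unlift_zero : ent (unlift u) 0 = 0 := by
  rw [ent_unlift, h.ent_one]

theorem ent_length_left : ent (u ++ v) u.length = 0 := by
  rw [ent_append_of_le _ _ le_rfl, Nat.sub_self, h.ent_zero_right]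

theorem ent_rotate_length : ent (rotate u v) v.length = 0 := by
  rw [rotate, ent_append_of_le _ _ le_rfl, Nat.sub_self, h.ent_unlift_zero]

theorem firstReturn_eq : firstReturn (u ++ v) = u.length :=
  firstReturn_eq_of (by have := h.two_le_length; omega)
    (fun i hi0 hi => by rw [ent_append_left v hi]; exact (h.prime.ent_pos i hi0 hi).ne')
    h.ent_length_left

theorem rotateIdx_spec {i : ℕ} (hi0 : 0 < i) (hi : i < u.length + v.length) :
    (i < u.length → rotateIdx u v i = i + v.length - 1 ∧
      ent (rotate u v) (rotateIdx u v i) + 1 = ent (u ++ v) i) ∧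
    (u.length ≤ i → rotateIdx u v i = i - u.length ∧
      ent (rotate u v) (rotateIdx u v i) = ent (u ++ v) i) := by
  refine ⟨fun hu => ?_, fun hu => ?_⟩
  · have hpos := h.prime.ent_pos i hi0 hu
    have e : rotateIdx u v i = i + v.length - 1 := if_pos hu
    refine ⟨e, ?_⟩
    rw [e, ent_rotate_of_le (by omega) (by omega),
      show i + v.length - 1 - v.length + 1 = i by omega, ent_append_left _ hu]
    omega
  · rw [rotateIdx, if_neg (by omega), ent_rotate_of_lt u (by omega),
      Nat.add_sub_cancel' hu]
    exact ⟨rfl, rfl⟩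

theorem isDyck_rotate : IsDyck (rotate u v) := by
  have hu2 := h.two_le_length
  have hlen := length_rotate h.ne_nil v
  refine ⟨fun he => by simp [he] at hlen; omega, ?_, fun j _ hj => ?_⟩
  · rcases Nat.eq_zero_or_pos v.length with hv | hv
    · simpa [hv] using h.ent_rotate_length
    · rw [ent_rotate_of_lt u hv, add_zero, h.ent_length_left]
  rcases lt_trichotomy (j + 1) v.length with hj' | hj' | hj'
  · rw [ent_rotate_of_lt u hj', ent_rotate_of_lt u (by omega)]
    exact h.isDyck.ent_succ_le _
  · rw [hj', h.ent_rotate_length]; omega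
  · rw [ent_rotate_of_le (by omega) (by omega), ent_rotate_of_le (by omega) (by omega),
      show j + 1 - v.length + 1 = j - v.length + 1 + 1 by omega]
    have := h.isDyck.ent_succ_le (j - v.length + 1)
    omega

theorem isRise_rotate_iff {i : ℕ} (hi0 : 0 < i) (hi : i < u.length + v.length) :
    IsRise (u ++ v) i ↔ IsRise (rotate u v) (rotateIdx u v i) := by
  have hs := h.rotateIdx_spec hi0 hi
  have hlen := length_rotate h.ne_nil v
  have hu2 := h.two_le_length
  unfold IsRise
  rw [List.length_append]
  by_cases hb : i + 1 = u.length ∨ i + 1 = u.length + v.length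
  · have h1 : ent (u ++ v) (i + 1) = 0 := by
      rcases hb with hb | hb
      · rw [hb, h.ent_length_left]
      · exact ent_of_length_le (by simp; omega)
    have h2 : ent (rotate u v) (rotateIdx u v i + 1) = 0 := by
      by_cases hb' : i + 1 = u.length
      · exact ent_of_length_le (by omega)
      · rw [show rotateIdx u v i + 1 = v.length by omega, h.ent_rotate_length]
    omega
  · by_cases hi1 : i + 1 < u.length + v.length
    · have hs' := h.rotateIdx_spec (i := i + 1) (by omega) hi1
      rw [show rotateIdx u v i + 1 = rotateIdx u v (i + 1) by omega]
      omega
    · omega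

theorem isPeak_rotate_iff {i : ℕ} (hi0 : 0 < i) (hi : i < u.length + v.length) :
    IsPeak (u ++ v) i ↔ IsPeak (rotate u v) (rotateIdx u v i) := by
  have := rotateIdx_lt h.ne_nil hi0 hi
  have := length_rotate h.ne_nil v
  unfold IsPeak
  rw [← h.isRise_rotate_iff hi0 hi, List.length_append]
  constructor <;> exact fun ⟨_, hr⟩ => ⟨by omega, hr⟩

theorem isBPartner_rotate_iff {k j : ℕ} (hk0 : 0 < k) (hk : k < u.length + v.length)
    (hj0 : 0 < j) (hj : j < u.length + v.length) :
    IsBPartner (u ++ v) k j ↔ IsBPartner (rotate u v) (rotateIdx u v k) (rotateIdx u v j) := by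
  have := h.rotateIdx_spec hk0 hk
  have := h.rotateIdx_spec hj0 hj
  unfold IsBPartner
  omega

theorem keyLt_rotate_iff {i j : ℕ} (hi0 : 0 < i) (hi : i < u.length + v.length)
    (hj0 : 0 < j) (hj : j < u.length + v.length) :
    KeyLt (u ++ v) i j ↔ KeyLt (rotate u v) (rotateIdx u v i) (rotateIdx u v j) := by
  have := h.rotateIdx_spec hi0 hi
  have := h.rotateIdx_spec hj0 hj
  unfold KeyLt
  omega

theorem bval_rotate {k : ℕ} (hk0 : 0 < k) (hk : k < u.length + v.length) :
    bval (u ++ v) k = bval (rotate u v) (rotateIdx u v k) := by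
  have hlen := length_rotate h.ne_nil v
  have hpos : ∀ j, IsBPartner (u ++ v) k j → 0 < j := by
    rintro j (⟨hkj, -⟩ | ⟨-, hj⟩)
    · omega
    · exact Nat.pos_of_ne_zero fun hj0 => by rw [hj0, h.ent_zero] at hj; omega
  rw [bval_eq_card, bval_eq_card]
  refine Finset.card_nbij' (rotateIdx u v) (unrotateIdx u v) (fun j hj => ?_) (fun j hj => ?_)
    (fun j hj => ?_) (fun j hj => ?_)
  · simp only [Finset.mem_coe, Finset.mem_filter, Finset.mem_range, List.length_append] at hj ⊢
    have := rotateIdx_lt h.ne_nil (hpos j hj.2) hj.1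
    exact ⟨by omega, (h.isBPartner_rotate_iff hk0 hk (hpos j hj.2) hj.1).mp hj.2⟩
  · simp only [Finset.mem_coe, Finset.mem_filter, Finset.mem_range, List.length_append] at hj ⊢
    have hψ := unrotateIdx_mem_Ioo h.ne_nil (u := u) (v := v) (j := j) (by omega)
    refine ⟨hψ.2, (h.isBPartner_rotate_iff hk0 hk hψ.1 hψ.2).mpr ?_⟩
    rw [rotateIdx_unrotateIdx (by omega)]
    exact hj.2
  · simp only [Finset.mem_coe, Finset.mem_filter, Finset.mem_range, List.length_append] at hj
    exact unrotateIdx_rotateIdx (hpos j hj.2) hj.1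
  · simp only [Finset.mem_coe, Finset.mem_filter, Finset.mem_range] at hj
    exact rotateIdx_unrotateIdx (by omega)

theorem lastMaxRow_pos : 0 < lastMaxRow (u ++ v) := by
  have hu2 := h.two_le_length
  obtain ⟨-, hmax⟩ := lastMaxRow_spec (l := u ++ v) (by simp [h.ne_nil])
  by_contra h0
  have h1 := hmax 1 (by simp; omega) (by omega)
  rw [show lastMaxRow (u ++ v) = 0 by omega] at h1
  unfold KeyLt at h1
  rw [h.ent_zero, ent_append_left _ (by omega), h.ent_one] at h1
  omega

theorem lastMaxRow_rotate :
    lastMaxRow (rotate u v) = rotateIdx u v (lastMaxRow (u ++ v)) := by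
  have hlen := length_rotate h.ne_nil v
  obtain ⟨hm, hmax⟩ := lastMaxRow_spec (l := u ++ v) (by simp [h.ne_nil])
  rw [List.length_append] at hm hmax
  have hm0 := h.lastMaxRow_pos
  refine lastMaxRow_eq_of_forall_keyLt (by have := rotateIdx_lt h.ne_nil hm0 hm; omega)
    fun j hj hjm => ?_
  have hψ := unrotateIdx_mem_Ioo h.ne_nil (u := u) (v := v) (j := j) (by omega)
  have hφψ := rotateIdx_unrotateIdx (u := u) (v := v) (j := j) (by omega)
  rw [← hφψ, ← h.keyLt_rotate_iff hψ.1 hψ.2 hm0 hm]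
  exact hmax _ hψ.2 fun he => hjm (by rw [← hφψ, he])

theorem rotate_mem_decPaths {T : Finset ℕ} {n : ℕ} (hmem : (u ++ v, T) ∈ decPaths n)
    (h0 : 0 ∉ T) : (rotate u v, T.image (rotateIdx u v)) ∈ decPaths (n - 1) := by
  obtain ⟨-, hlen, -, hlmr⟩ := mem_decPaths.mp hmem
  have hT := subset_Ioo_of_mem_decPaths hmem h0
  rw [List.length_append] at hT hlen
  have hrlen := length_rotate h.ne_nil v
  obtain ⟨hm, -⟩ := lastMaxRow_spec (l := u ++ v) (by simp [h.ne_nil])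
  rw [List.length_append] at hm
  refine mem_decPaths.mpr ⟨h.isDyck_rotate, by omega, fun s hs => ?_, ?_⟩
  · obtain ⟨t, ht, rfl⟩ := Finset.mem_image.mp hs
    have := rotateIdx_lt h.ne_nil (hT ht).1 (hT ht).2
    omega
  · rw [h.lastMaxRow_rotate]
    intro hmem'
    obtain ⟨t, ht, he⟩ := Finset.mem_image.mp hmem'
    exact hlmr (rotateIdx_injOn (hT ht) ⟨h.lastMaxRow_pos, hm⟩ he ▸ ht)

theorem mem_decPaths_of_rotate {S : Finset ℕ} {m : ℕ} (hmem : (rotate u v, S) ∈ decPaths m) :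
    (u ++ v, S.image (unrotateIdx u v)) ∈ decPaths (m + 1) ∧ 0 ∉ S.image (unrotateIdx u v) := by
  obtain ⟨-, hlen, hS, hlmr⟩ := mem_decPaths.mp hmem
  have hrlen := length_rotate h.ne_nil v
  have hψ : ∀ j ∈ S, unrotateIdx u v j ∈ Set.Ioo 0 (u.length + v.length) :=
    fun j hj => unrotateIdx_mem_Ioo h.ne_nil (by have := hS j hj; omega)
  refine ⟨mem_decPaths.mpr ⟨h.isDyck, by simp; omega, fun s hs => ?_, fun hm => ?_⟩, fun h0 => ?_⟩
  · obtain ⟨j, hj, rfl⟩ := Finset.mem_image.mp hs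
    simpa using (hψ j hj).2
  · obtain ⟨j, hj, he⟩ := Finset.mem_image.mp hm
    apply hlmr
    rw [h.lastMaxRow_rotate, ← he, rotateIdx_unrotateIdx (by have := hS j hj; omega)]
    exact hj
  · obtain ⟨j, hj, he⟩ := Finset.mem_image.mp h0
    exact (hψ j hj).1.ne' he

theorem sortPair_mem_dinvPairs_rotate_iff {a b : ℕ} (ha : a ∈ Set.Ioo 0 (u.length + v.length))
    (hb : b ∈ Set.Ioo 0 (u.length + v.length)) :
    sortPair a b ∈ dinvPairs (u ++ v) ↔
      sortPair (rotateIdx u v a) (rotateIdx u v b) ∈ dinvPairs (rotate u v) := by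
  have := rotateIdx_lt h.ne_nil ha.1 ha.2
  have := rotateIdx_lt h.ne_nil hb.1 hb.2
  have := length_rotate h.ne_nil v
  have := ha.2
  have := hb.2
  rw [sortPair_mem_dinvPairs, sortPair_mem_dinvPairs, h.isBPartner_rotate_iff ha.1 ha.2 hb.1 hb.2,
    h.isBPartner_rotate_iff hb.1 hb.2 ha.1 ha.2, rotateIdx_injOn.ne_iff ha hb, List.length_append,
    max_lt_iff, max_lt_iff]
  constructor <;> exact fun ⟨hne, _, hr⟩ => ⟨hne, by omega, hr⟩

theorem card_dinvPairs_fst_ne_zero :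
    ((dinvPairs (u ++ v)).filter (·.1 ≠ 0)).card = dinv (rotate u v) := by
  have hlen := length_rotate h.ne_nil v
  have hIoo : ∀ {a b : ℕ}, (a, b) ∈ dinvPairs (u ++ v) → a ≠ 0 → (a, b) = sortPair a b ∧
      a ∈ Set.Ioo 0 (u.length + v.length) ∧ b ∈ Set.Ioo 0 (u.length + v.length) :=
    fun {a b} hp h0 => by
      obtain ⟨h12, h2, -⟩ := mem_dinvPairs.mp hp
      rw [List.length_append] at h2
      exact ⟨(sortPair_of_lt h12).symm, ⟨by omega, by omega⟩, ⟨by omega, h2⟩⟩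
  have hIoo' : ∀ {a b : ℕ}, (a, b) ∈ dinvPairs (rotate u v) → (a, b) = sortPair a b ∧
      a + 1 < u.length + v.length ∧ b + 1 < u.length + v.length := fun {a b} hq => by
    obtain ⟨h12, h2, -⟩ := mem_dinvPairs.mp hq
    exact ⟨(sortPair_of_lt h12).symm, by omega, by omega⟩
  refine Finset.card_nbij' (fun p => sortPair (rotateIdx u v p.1) (rotateIdx u v p.2))
    (fun q => sortPair (unrotateIdx u v q.1) (unrotateIdx u v q.2))
    (fun ⟨a, b⟩ hp => ?_) (fun ⟨a, b⟩ hq => ?_) (fun ⟨a, b⟩ hp => ?_) (fun ⟨a, b⟩ hq => ?_)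
  · dsimp only
    obtain ⟨hp, h0⟩ := Finset.mem_filter.mp hp
    obtain ⟨he, ha, hb⟩ := hIoo hp h0
    exact (h.sortPair_mem_dinvPairs_rotate_iff ha hb).mp (he ▸ hp)
  · dsimp only
    obtain ⟨he, ha, hb⟩ := hIoo' hq
    have ha' := unrotateIdx_mem_Ioo h.ne_nil ha
    have hb' := unrotateIdx_mem_Ioo h.ne_nil hb
    refine Finset.mem_filter.mpr ⟨(h.sortPair_mem_dinvPairs_rotate_iff ha' hb').mpr ?_, ?_⟩
    · rwa [rotateIdx_unrotateIdx ha, rotateIdx_unrotateIdx hb, ← he]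
    · simp only [sortPair]; have := ha'.1; have := hb'.1; omega
  · obtain ⟨hp, h0⟩ := Finset.mem_filter.mp hp
    obtain ⟨he, ha, hb⟩ := hIoo hp h0
    change sortPair (unrotateIdx u v (min _ _)) (unrotateIdx u v (max _ _)) = _
    rw [sortPair_min_max, unrotateIdx_rotateIdx ha.1 ha.2, unrotateIdx_rotateIdx hb.1 hb.2,
      ← he]
  · obtain ⟨he, ha, hb⟩ := hIoo' hq
    change sortPair (rotateIdx u v (min _ _)) (rotateIdx u v (max _ _)) = _
    rw [sortPair_min_max, rotateIdx_unrotateIdx ha, rotateIdx_unrotateIdx hb, ← he]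

theorem card_dinvPairs_fst_eq_zero :
    ((dinvPairs (u ++ v)).filter (·.1 = 0)).card = (segStarts v).length := by
  have hu2 := h.two_le_length
  rw [← List.toFinset_card_of_nodup (nodup_segStarts v),
    ← Finset.card_image_of_injective _ (fun a b he => by simpa using he :
      Function.Injective fun j => ((0 : ℕ), u.length + j))]
  congr 1
  ext ⟨i, j⟩
  simp only [Finset.mem_filter, mem_dinvPairs, Finset.mem_image, List.mem_toFinset,
    mem_segStarts, Prod.mk.injEq, List.length_append]
  constructor
  · rintro ⟨⟨hij, hj, hrel⟩, rfl⟩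
    rw [h.ent_zero] at hrel
    have hj' : u.length ≤ j := by
      by_contra hlt
      have := h.prime.ent_pos j hij (by omega)
      rw [← ent_append_left v (by omega)] at this
      omega
    refine ⟨j - u.length, ⟨by omega, ?_⟩, rfl, by omega⟩
    rw [← ent_append_right u v, Nat.add_sub_cancel' hj']
    omega
  · rintro ⟨j', ⟨hj', hz⟩, rfl, rfl⟩
    rw [h.ent_zero, ent_append_right, hz]
    exact ⟨⟨by omega, by omega, Or.inl rfl⟩, rfl⟩

theorem dinv_eq : dinv (u ++ v) = dinv (rotate u v) + (segStarts v).length := by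
  rw [dinv, ← Finset.card_filter_add_card_filter_not (·.1 = 0), h.card_dinvPairs_fst_eq_zero,
    h.card_dinvPairs_fst_ne_zero, add_comm]

theorem area_eq : area (u ++ v) = area (rotate u v) + (u.length - 1) := by
  obtain ⟨t, ht⟩ : ∃ t, u = 0 :: t := by
    cases u with
    | nil => exact absurd rfl h.ne_nil
    | cons a t => exact ⟨t, by rw [show a = 0 from h.prime.ent_zero]⟩
  have hpos : ∀ x ∈ t, 0 < x := fun x hx => by
    obtain ⟨i, hi, rfl⟩ := List.mem_iff_getElem.mp hx
    have := h.prime.ent_pos (i + 1) (by omega) (by simp [ht, hi])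
    rwa [ht, ent_cons_succ, ent_eq_getElem hi] at this
  have := sum_map_sub_one_add_length hpos
  simp only [area, rotate, unlift, ht, List.sum_append, List.sum_cons, List.tail_cons,
    List.length_cons] at this ⊢
  omega

theorem ent_succ_rotate_of_isRise {i : ℕ} (hi0 : 0 < i) (hr : IsRise (u ++ v) i) :
    ent (rotate u v) (rotateIdx u v i + 1) + (if i < u.length then 1 else 0) =
      ent (u ++ v) (i + 1) := by
  obtain ⟨hi1, hval⟩ := hr
  rw [List.length_append] at hi1
  have hne : i + 1 ≠ u.length := fun he => by rw [he, h.ent_length_left] at hval; omega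
  have hs := h.rotateIdx_spec hi0 (by omega)
  have hs' := h.rotateIdx_spec (i := i + 1) (by omega) hi1
  rw [show rotateIdx u v i + 1 = rotateIdx u v (i + 1) by omega]
  split <;> omega

section Decorations

variable {T : Finset ℕ} (hT : (T : Set ℕ) ⊆ Set.Ioo 0 (u.length + v.length))
include hT

theorem riseSet_rotate :
    riseSet (rotate u v) (T.image (rotateIdx u v)) =
      (riseSet (u ++ v) T).image (rotateIdx u v) := by
  rw [riseSet, riseSet, Finset.filter_image]
  exact congrArg _ (Finset.filter_congr fun i hi => (h.isRise_rotate_iff (hT hi).1 (hT hi).2).symm)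

theorem peakSet_rotate :
    peakSet (rotate u v) (T.image (rotateIdx u v)) =
      (peakSet (u ++ v) T).image (rotateIdx u v) := by
  rw [peakSet, peakSet, Finset.filter_image]
  exact congrArg _ (Finset.filter_congr fun i hi => (h.isPeak_rotate_iff (hT hi).1 (hT hi).2).symm)

theorem card_riseSet_rotate :
    (riseSet (rotate u v) (T.image (rotateIdx u v))).card = (riseSet (u ++ v) T).card := by
  rw [h.riseSet_rotate hT,
    card_image_rotateIdx (T := riseSet (u ++ v) T) fun i hi => hT (mem_riseSet.mp hi).1]

theorem card_peakSet_rotate :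
    (peakSet (rotate u v) (T.image (rotateIdx u v))).card = (peakSet (u ++ v) T).card := by
  rw [h.peakSet_rotate hT,
    card_image_rotateIdx (T := peakSet (u ++ v) T) fun i hi => hT (mem_peakSet.mp hi).1]

theorem sum_bval_peakSet_rotate :
    ∑ i ∈ peakSet (rotate u v) (T.image (rotateIdx u v)), bval (rotate u v) i =
      ∑ i ∈ peakSet (u ++ v) T, bval (u ++ v) i := by
  have hP : ∀ i ∈ peakSet (u ++ v) T, i ∈ Set.Ioo 0 (u.length + v.length) :=
    fun i hi => hT (mem_peakSet.mp hi).1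
  rw [h.peakSet_rotate hT, Finset.sum_image (rotateIdx_injOn.mono hP)]
  exact Finset.sum_congr rfl fun k hk => (h.bval_rotate (hP k hk).1 (hP k hk).2).symm

theorem dinvC_eq :
    dinvC (u ++ v) T = dinvC (rotate u v) (T.image (rotateIdx u v)) + (segStarts v).length := by
  have hle := sum_bval_le_dinv (rotate u v)
    (T := peakSet (rotate u v) (T.image (rotateIdx u v)))
    fun k hk => (mem_peakSet.mp hk).2.1
  unfold dinvC
  rw [h.dinv_eq, ← h.sum_bval_peakSet_rotate hT]
  omega

theorem riseTouch_rotate :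
    riseTouch (rotate u v) (T.image (rotateIdx u v)) = riseTouch v (shiftDown T u.length) ++
      riseTouch (unlift u) (shiftDown (T.image (rotateIdx u v)) v.length) := by
  rw [rotate, riseTouch_append _ h.ent_unlift_zero, filter_image_rotateIdx hT]

theorem card_riseSet_left_eq :
    (riseSet u (T.filter (· < u.length))).card =
      (riseSet (unlift u) (shiftDown (T.image (rotateIdx u v)) v.length)).card := by
  have h1 := card_riseSet_append (x := u) T h.ent_zero_right
  have h2 := card_riseSet_append (x := v) (T.image (rotateIdx u v)) h.ent_unlift_zero
  rw [show v ++ unlift u = rotate u v from rfl, h.card_riseSet_rotate hT,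
    filter_image_rotateIdx hT] at h2
  omega

theorem riseTouch_sum_unlift :
    (riseTouch (unlift u) (shiftDown (T.image (rotateIdx u v)) v.length)).sum =
      u.length - 1 - (riseSet u (T.filter (· < u.length))).card := by
  have := riseTouch_sum_add_card_riseSet (shiftDown (T.image (rotateIdx u v)) v.length)
    h.ent_unlift_zero
  rw [length_unlift, ← h.card_riseSet_left_eq hT] at this
  omega

theorem riseTouch_eq_cons :
    riseTouch (u ++ v) T =
      ((riseTouch (unlift u) (shiftDown (T.image (rotateIdx u v)) v.length)).sum + 1) ::
        riseTouch v (shiftDown T u.length) := by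
  have := card_riseSet_le u (T.filter (· < u.length))
  have := h.two_le_length
  rw [h.prime.riseTouch_append T h.ent_zero_right, h.riseTouch_sum_unlift hT]
  congr 1
  omega

theorem sum_ent_succ_riseSet_rotate :
    ∑ i ∈ riseSet (rotate u v) (T.image (rotateIdx u v)), ent (rotate u v) (i + 1) +
        (riseSet u (T.filter (· < u.length))).card =
      ∑ i ∈ riseSet (u ++ v) T, ent (u ++ v) (i + 1) := by
  have hR : ∀ i ∈ riseSet (u ++ v) T, i ∈ Set.Ioo 0 (u.length + v.length) :=
    fun i hi => hT (mem_riseSet.mp hi).1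
  have hfil : (riseSet (u ++ v) T).filter (· < u.length) = riseSet u (T.filter (· < u.length)) := by
    rw [riseSet_append T h.ent_zero_right, Finset.filter_union,
      Finset.filter_true_of_mem (s := riseSet u _) fun i hi => by
        have := lt_length_of_mem_riseSet hi; omega,
      Finset.filter_false_of_mem (s := Finset.image _ _) fun i hi => by
        obtain ⟨j, -, rfl⟩ := Finset.mem_image.mp hi; omega,
      Finset.union_empty]
  rw [h.riseSet_rotate hT, Finset.sum_image (rotateIdx_injOn.mono hR), ← hfil,
    Finset.card_filter, ← Finset.sum_add_distrib]
  exact Finset.sum_congr rfl fun i hi =>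
    h.ent_succ_rotate_of_isRise (hR i hi).1 (mem_riseSet.mp hi).2

theorem areaC_eq :
    areaC (u ++ v) T = areaC (rotate u v) (T.image (rotateIdx u v)) +
      (riseTouch (unlift u) (shiftDown (T.image (rotateIdx u v)) v.length)).sum := by
  have := h.sum_ent_succ_riseSet_rotate hT
  have := sum_ent_succ_riseSet_le_area (rotate u v) (T.image (rotateIdx u v))
  have := card_riseSet_le u (T.filter (· < u.length))
  unfold areaC
  rw [h.area_eq, h.riseTouch_sum_unlift hT]
  omega

end Decorations

end IsPrimeSplit

/-! ### The bijection -/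

/-- The set `A` of the statement. -/
def sourcePaths (n a k ℓ : ℕ) (β : List ℕ) : Set (List ℕ × Finset ℕ) :=
  {p | p ∈ decPaths n ∧ riseTouch p.1 p.2 = (a + 1) :: β ∧ (peakSet p.1 p.2).card = k ∧
    (riseSet p.1 p.2).card = ℓ ∧ 0 ∉ p.2}

/-- The set `B` of the statement, for paths of size `m`. -/
def targetPaths (m a k ℓ : ℕ) (β : List ℕ) : Set (List ℕ × Finset ℕ) :=
  {p | p ∈ decPaths m ∧ (peakSet p.1 p.2).card = k ∧ (riseSet p.1 p.2).card = ℓ ∧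
    ∃ γ : List ℕ, (∀ x ∈ γ, 0 < x) ∧ γ.sum = a ∧ riseTouch p.1 p.2 = β ++ γ}

namespace IsPrimeSplit

variable {u v : List ℕ} (h : IsPrimeSplit u v) {n m a k ℓ : ℕ} {β : List ℕ}
include h

theorem riseTouch_parts_of_eq_cons {T : Finset ℕ}
    (hT : (T : Set ℕ) ⊆ Set.Ioo 0 (u.length + v.length))
    (hrt : riseTouch (u ++ v) T = (a + 1) :: β) :
    riseTouch v (shiftDown T u.length) = β ∧
      (riseTouch (unlift u) (shiftDown (T.image (rotateIdx u v)) v.length)).sum = a := by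
  rw [h.riseTouch_eq_cons hT, List.cons.injEq] at hrt
  exact ⟨hrt.2, by omega⟩

theorem rotate_mem_targetPaths {T : Finset ℕ} (hp : (u ++ v, T) ∈ sourcePaths n a k ℓ β) :
    (rotate u v, T.image (rotateIdx u v)) ∈ targetPaths (n - 1) a k ℓ β := by
  obtain ⟨hmem, hrt, hpk, hrs, h0⟩ := hp
  have hT := List.length_append (as := u) ▸ subset_Ioo_of_mem_decPaths hmem h0
  obtain ⟨hβ, hγ⟩ := h.riseTouch_parts_of_eq_cons hT hrt
  exact ⟨h.rotate_mem_decPaths hmem h0, (h.card_peakSet_rotate hT).trans hpk,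
    (h.card_riseSet_rotate hT).trans hrs, _, fun _ => pos_of_mem_riseTouch h.ent_unlift_zero _,
    hγ, by rw [h.riseTouch_rotate hT, hβ]⟩

theorem dinvC_areaC_rotate {T : Finset ℕ} (hp : (u ++ v, T) ∈ sourcePaths n a k ℓ β) :
    dinvC (u ++ v) T = dinvC (rotate u v) (T.image (rotateIdx u v)) + β.length ∧
      areaC (u ++ v) T = areaC (rotate u v) (T.image (rotateIdx u v)) + a := by
  obtain ⟨hmem, hrt, -, -, h0⟩ := hp
  have hT := List.length_append (as := u) ▸ subset_Ioo_of_mem_decPaths hmem h0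
  obtain ⟨hβ, hγ⟩ := h.riseTouch_parts_of_eq_cons hT hrt
  rw [h.dinvC_eq hT, h.areaC_eq hT, hγ, ← hβ, length_riseTouch]
  exact ⟨rfl, rfl⟩

theorem mem_sourcePaths_of_rotate {S : Finset ℕ} (hq : (rotate u v, S) ∈ targetPaths m a k ℓ β)
    (hv : (segStarts v).length = β.length) :
    (u ++ v, S.image (unrotateIdx u v)) ∈ sourcePaths (m + 1) a k ℓ β := by
  obtain ⟨hmem, hpk, hrs, γ, -, hγ, hrt⟩ := hq
  obtain ⟨hmem', h0⟩ := h.mem_decPaths_of_rotate hmem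
  have hT := List.length_append (as := u) ▸ subset_Ioo_of_mem_decPaths hmem' h0
  have hS : (S.image (unrotateIdx u v)).image (rotateIdx u v) = S :=
    image_rotateIdx_unrotateIdx fun j hj => by
      have := (mem_decPaths.mp hmem).2.2.1 j hj
      have := length_rotate h.ne_nil v
      omega
  rw [← hS, h.riseTouch_rotate hT] at hrt
  obtain ⟨hβ, rfl⟩ := List.append_inj hrt (by rw [length_riseTouch, hv])
  rw [← hS, h.card_peakSet_rotate hT] at hpk
  rw [← hS, h.card_riseSet_rotate hT] at hrs
  exact ⟨hmem', by rw [h.riseTouch_eq_cons hT, hβ, hγ], hpk, hrs, h0⟩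

end IsPrimeSplit

/-- The map `Φ` of the statement. -/
def rotatePath (p : List ℕ × Finset ℕ) : List ℕ × Finset ℕ :=
  (rotate (p.1.take (firstReturn p.1)) (p.1.drop (firstReturn p.1)),
    p.2.image (rotateIdx (p.1.take (firstReturn p.1)) (p.1.drop (firstReturn p.1))))

/-- The inverse of `rotatePath` on `targetPaths`, used with `k = ℓ(β)`: the path is cut where
its segment number `k` (counted from `0`) starts. -/
def unrotatePath (k : ℕ) (p : List ℕ × Finset ℕ) : List ℕ × Finset ℕ :=
  (lift (p.1.drop (splitPoint p.1 k)) ++ p.1.take (splitPoint p.1 k),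
    p.2.image (unrotateIdx (lift (p.1.drop (splitPoint p.1 k))) (p.1.take (splitPoint p.1 k))))

section Paths

variable {n a k ℓ : ℕ} {β : List ℕ}

theorem isPrimeSplit_of_mem_sourcePaths (ha : 1 ≤ a) {l : List ℕ} {S : Finset ℕ}
    (hp : (l, S) ∈ sourcePaths n a k ℓ β) :
    IsPrimeSplit (l.take (firstReturn l)) (l.drop (firstReturn l)) :=
  isPrimeSplit_take_drop (mem_decPaths.mp hp.1).1 ha hp.2.1

theorem isPrimeSplit_of_mem_targetPaths (ha : 1 ≤ a) {l : List ℕ} {S : Finset ℕ}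
    (hq : (l, S) ∈ targetPaths (n - 1) a k ℓ β) :
    IsPrimeSplit (lift (l.drop (splitPoint l β.length))) (l.take (splitPoint l β.length)) ∧
      (segStarts (l.take (splitPoint l β.length))).length = β.length := by
  obtain ⟨hmem, -, -, γ, -, hγ, hrt⟩ := hq
  have hd := (mem_decPaths.mp hmem).1
  have hk : β.length < (segStarts l).length := by
    rw [← length_riseTouch l S, hrt, List.length_append, Nat.lt_add_right_iff_pos,
      List.length_pos_iff]
    rintro rfl
    simp at hγ
    omega
  obtain ⟨hlt, hz, hlen⟩ := splitPoint_spec hk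
  refine ⟨isPrimeSplit_lift (by rwa [List.take_append_drop]) (by simpa using hlt)
    (by rwa [ent_drop, add_zero]), hlen⟩

theorem rotatePath_mem (ha : 1 ≤ a) {p : List ℕ × Finset ℕ} (hp : p ∈ sourcePaths n a k ℓ β) :
    rotatePath p ∈ targetPaths (n - 1) a k ℓ β :=
  (isPrimeSplit_of_mem_sourcePaths ha hp).rotate_mem_targetPaths
    (by rwa [List.take_append_drop])

theorem dinvC_areaC_rotatePath (ha : 1 ≤ a) {p : List ℕ × Finset ℕ}
    (hp : p ∈ sourcePaths n a k ℓ β) :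
    dinvC p.1 p.2 = dinvC (rotatePath p).1 (rotatePath p).2 + β.length ∧
      areaC p.1 p.2 = areaC (rotatePath p).1 (rotatePath p).2 + a := by
  have := (isPrimeSplit_of_mem_sourcePaths ha hp).dinvC_areaC_rotate
    (by rwa [List.take_append_drop])
  rwa [List.take_append_drop] at this

theorem unrotatePath_mem (ha : 1 ≤ a) {q : List ℕ × Finset ℕ}
    (hq : q ∈ targetPaths (n - 1) a k ℓ β) : unrotatePath β.length q ∈ sourcePaths n a k ℓ β := by
  obtain ⟨h, hv⟩ := isPrimeSplit_of_mem_targetPaths ha hq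
  have hn : n - 1 + 1 = n := by
    have := (mem_decPaths.mp hq.1).2.1 ▸ List.length_pos_iff.mpr (mem_decPaths.mp hq.1).1.1
    omega
  exact hn ▸ h.mem_sourcePaths_of_rotate (by rwa [rotate_lift_drop_take]) hv

theorem unrotatePath_rotatePath (ha : 1 ≤ a) {p : List ℕ × Finset ℕ}
    (hp : p ∈ sourcePaths n a k ℓ β) : unrotatePath β.length (rotatePath p) = p := by
  obtain ⟨l, S⟩ := p
  have h := isPrimeSplit_of_mem_sourcePaths ha hp
  have hp' : (l.take (firstReturn l) ++ l.drop (firstReturn l), S) ∈ sourcePaths n a k ℓ β := by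
    rwa [List.take_append_drop]
  obtain ⟨hmem, hrt, -, -, h0⟩ := hp'
  have hT := List.length_append (as := l.take _) ▸ subset_Ioo_of_mem_decPaths hmem h0
  have hv : (segStarts (l.drop (firstReturn l))).length = β.length := by
    rw [← (h.riseTouch_parts_of_eq_cons hT hrt).1, length_riseTouch]
  have hsplit : splitPoint (rotate (l.take (firstReturn l)) (l.drop (firstReturn l))) β.length =
      (l.drop (firstReturn l)).length := by
    rw [← hv]
    refine splitPoint_append (fun he => ?_) h.ent_unlift_zero
    have hlen := congrArg List.length he
    simp only [length_unlift, List.length_nil] at hlen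
    have := h.two_le_length
    omega
  simp only [unrotatePath, rotatePath, hsplit]
  simp only [rotate, List.drop_left, List.take_left, lift_unlift h.prime,
    List.take_append_drop, image_unrotateIdx_rotateIdx hT]

theorem rotatePath_unrotatePath (ha : 1 ≤ a) {q : List ℕ × Finset ℕ}
    (hq : q ∈ targetPaths (n - 1) a k ℓ β) : rotatePath (unrotatePath β.length q) = q := by
  obtain ⟨l, S⟩ := q
  obtain ⟨h, -⟩ := isPrimeSplit_of_mem_targetPaths ha hq
  have hmem : (rotate (lift (l.drop (splitPoint l β.length))) (l.take (splitPoint l β.length)), S)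
      ∈ decPaths (n - 1) := by rw [rotate_lift_drop_take]; exact hq.1
  have hS := (mem_decPaths.mp hmem).2.2.1
  have hrlen := length_rotate h.ne_nil (l.take (splitPoint l β.length))
  simp only [unrotatePath, rotatePath, h.firstReturn_eq, List.take_left, List.drop_left]
  rw [image_rotateIdx_unrotateIdx fun j hj => by have := hS j hj; omega,
    rotate_lift_drop_take]

end Paths

end DeltaCat

theorem rotation_bijection_undecorated_first_step_general
    (a k ℓ n : ℕ) (ha : 1 ≤ a) (β : List ℕ) :
    ∃ Φ : {p : List ℕ × Finset ℕ // p ∈ decPaths n ∧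
            riseTouch p.1 p.2 = (a + 1) :: β ∧ (peakSet p.1 p.2).card = k ∧
            (riseSet p.1 p.2).card = ℓ ∧ 0 ∉ p.2} →
          {p : List ℕ × Finset ℕ // p ∈ decPaths (n - 1) ∧
            (peakSet p.1 p.2).card = k ∧ (riseSet p.1 p.2).card = ℓ ∧
            ∃ γ : List ℕ, (∀ x ∈ γ, 0 < x) ∧ γ.sum = a ∧
              riseTouch p.1 p.2 = β ++ γ},
      Function.Bijective Φ ∧
        ∀ p, dinvC p.1.1 p.1.2 = dinvC (Φ p).1.1 (Φ p).1.2 + β.length ∧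
             areaC p.1.1 p.1.2 = areaC (Φ p).1.1 (Φ p).1.2 + a := by
  refine ⟨fun p => ⟨rotatePath p.1, rotatePath_mem ha p.2⟩, ?_,
    fun p => dinvC_areaC_rotatePath ha p.2⟩
  refine Function.bijective_iff_has_inverse.mpr
    ⟨fun q => ⟨unrotatePath β.length q.1, unrotatePath_mem ha q.2⟩, fun p => ?_, fun q => ?_⟩
  · exact Subtype.ext (unrotatePath_rotatePath ha p.2)
  · exact Subtype.ext (rotatePath_unrotatePath ha q.2)

/-- Case 1 of Proposition 3.1: cyclic rotation is a bijection between ∘-decorated Dyck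
paths of size `n = a + 1 + |β| + ℓ` with rise-touch composition `(a+1, β)`, `k` decorated
peaks, `ℓ` decorated double rises and undecorated first row, and ∘-decorated Dyck paths
of size `n - 1` with `k` decorated peaks, `ℓ` decorated double rises and rise-touch
composition `(β, γ)` for some `γ ⊨ a`; it shifts `dinv_∘` by `ℓ(β)` and `area_∘` by `a`. -/
theorem rotation_bijection_undecorated_first_step
    (a k ℓ n : ℕ) (ha : 1 ≤ a) (β : List ℕ) (hβ : ∀ x ∈ β, 0 < x)
    (hn : n = a + 1 + β.sum + ℓ) :
    ∃ Φ : {p : List ℕ × Finset ℕ // p ∈ decPaths n ∧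
            riseTouch p.1 p.2 = (a + 1) :: β ∧ (peakSet p.1 p.2).card = k ∧
            (riseSet p.1 p.2).card = ℓ ∧ 0 ∉ p.2} →
          {p : List ℕ × Finset ℕ // p ∈ decPaths (n - 1) ∧
            (peakSet p.1 p.2).card = k ∧ (riseSet p.1 p.2).card = ℓ ∧
            ∃ γ : List ℕ, (∀ x ∈ γ, 0 < x) ∧ γ.sum = a ∧
              riseTouch p.1 p.2 = β ++ γ},
      Function.Bijective Φ ∧
        ∀ p, dinvC p.1.1 p.1.2 = dinvC (Φ p).1.1 (Φ p).1.2 + β.length ∧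
             areaC p.1.1 p.1.2 = areaC (Φ p).1.1 (Φ p).1.2 + a :=
  rotation_bijection_undecorated_first_step_general a k ℓ n ha β
end
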